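/- arXiv:1904.13311 — 4 statements merged into one kernel-verified Lean document; each statement's English description precedes it below -/
import Mathlib

section
/- If ν is a finite complex Borel measure with compact support in ℂ and 0 < s < 2, then the principal value Cauchy transform C(ν)(z) = lim_{ε→0} ∫_{|w−z|>ε} (w−z)^{−1} dν(w) exists for almost every z with respect to planar Lebesgue measure, and the function C(ν) belongs to L^s_loc(ℂ) with respect to area measure. -/
/-!
Let `ν = ‖g‖ₑ • μ` and `P z = ∫⁻ w, ‖w - z‖ₑ⁻¹ ∂ν`, which dominates every truncated Cauchy
integral. For `1 ≤ t`, Jensen gives `P z ^ t ≤ ν(ℂ) ^ (t - 1) * ∫⁻ w, ‖w - z‖ₑ⁻¹ ^ t ∂ν`, and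
Tonelli bounds `∫⁻ z in C, P z ^ t` by `ν(ℂ) ^ t * (vol C + ∫⁻ u in ball 0 1, ‖u‖ₑ⁻¹ ^ t)`,
which is finite when `t < 2`. Hence `P` is finite almost everywhere and locally in `L^t`.
Wherever `P z < ∞` the kernel is integrable, so by dominated convergence the principal value is
the absolutely convergent integral `∫ w, (w - z)⁻¹ * g w ∂μ`, whose norm is at most `P z`.
-/

open MeasureTheory Metric Set Filter Complex Topology
open scoped ENNReal

theorem rpow_lintegral_le_measure_univ_rpow_mul_lintegral_rpow {α : Type*}
    [MeasurableSpace α] {ν : Measure α} {f : α → ℝ≥0∞} (hf : AEMeasurable f ν) {t : ℝ}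
    (ht : 1 ≤ t) :
    (∫⁻ a, f a ∂ν) ^ t ≤ ν univ ^ (t - 1) * ∫⁻ a, f a ^ t ∂ν := by
  have ht0 : 0 < t := one_pos.trans_le ht
  have H := eLpNorm'_le_eLpNorm'_mul_rpow_measure_univ one_pos ht hf.aestronglyMeasurable
  simp only [eLpNorm'_eq_lintegral_enorm, enorm_eq_self, ENNReal.rpow_one, div_one] at H
  calc (∫⁻ a, f a ∂ν) ^ t
      ≤ ((∫⁻ a, f a ^ t ∂ν) ^ (1 / t) * ν univ ^ (1 - 1 / t)) ^ t :=
        ENNReal.rpow_le_rpow H ht0.le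
    _ = ν univ ^ (t - 1) * ∫⁻ a, f a ^ t ∂ν := by
        rw [ENNReal.mul_rpow_of_nonneg _ _ ht0.le, ← ENNReal.rpow_mul, ← ENNReal.rpow_mul,
          one_div_mul_cancel ht0.ne', ENNReal.rpow_one, mul_comm, sub_mul,
          one_div_mul_cancel ht0.ne', one_mul]

theorem integrableOn_norm_rpow_of_enorm_le {α F : Type*} [MeasurableSpace α]
    [NormedAddCommGroup F] {μ : Measure α} {C : Set α} (hC : μ C ≠ ∞) {f : α → F} {P : α → ℝ≥0∞}
    (hf : AEStronglyMeasurable f (μ.restrict C)) (hfP : ∀ x, ‖f x‖ₑ ≤ P x) {s t : ℝ}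
    (hs : 0 < s) (hst : s ≤ t) (hP : ∫⁻ x in C, P x ^ t ∂μ < ∞) :
    IntegrableOn (fun x => ‖f x‖ ^ s) C μ := by
  have : IsFiniteMeasure (μ.restrict C) := isFiniteMeasure_restrict.mpr hC
  have ht : 0 < t := hs.trans_le hst
  have hft : MemLp f (ENNReal.ofReal t) (μ.restrict C) := by
    refine ⟨hf, (eLpNorm_lt_top_iff_lintegral_rpow_enorm_lt_top (by simpa using ht)
      ENNReal.ofReal_ne_top).mpr ?_⟩
    rw [ENNReal.toReal_ofReal ht.le]
    exact (lintegral_mono fun x => ENNReal.rpow_le_rpow (hfP x) ht.le).trans_lt hP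
  simpa [IntegrableOn, ENNReal.toReal_ofReal hs.le] using
    (hft.mono_exponent (ENNReal.ofReal_le_ofReal hst)).integrable_norm_rpow
      (by simpa using hs) ENNReal.ofReal_ne_top

theorem tendsto_setIntegral_norm_sub_gt {G F : Type*} [NormedAddCommGroup G]
    [MeasurableSpace G] [OpensMeasurableSpace G] [NormedAddCommGroup F] [NormedSpace ℝ F]
    {μ : Measure G} {h : G → F} (hh : Integrable h μ) {z : G} (hz : h z = 0) :
    Tendsto (fun ε : ℝ => ∫ w in {w | ε < ‖w - z‖}, h w ∂μ) (𝓝[>] 0) (𝓝 (∫ w, h w ∂μ)) := by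
  have hmeas : ∀ ε : ℝ, MeasurableSet {w : G | ε < ‖w - z‖} := fun ε =>
    (isOpen_lt continuous_const (by fun_prop)).measurableSet
  simp_rw [← integral_indicator (hmeas _)]
  refine tendsto_integral_filter_of_dominated_convergence (fun w => ‖h w‖)
    (Eventually.of_forall fun ε => hh.1.indicator (hmeas ε))
    (Eventually.of_forall fun ε => Eventually.of_forall fun w =>
      norm_indicator_le_norm_self _ _)
    hh.norm (Eventually.of_forall fun w => ?_)
  rcases eq_or_ne w z with rfl | hw
  · simp [indicator_apply, hz]
  · refine tendsto_const_nhds.congr' ?_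
    filter_upwards [Ioo_mem_nhdsGT (norm_pos_iff.mpr (sub_ne_zero.mpr hw))] with ε hε
    exact (indicator_of_mem (show w ∈ {w | ε < ‖w - z‖} from hε.2) h).symm

theorem enorm_inv_rpow_le_one_add_indicator {G : Type*} [NormedAddCommGroup G] {t : ℝ}
    (ht : 0 ≤ t) (x : G) :
    ‖x‖ₑ⁻¹ ^ t ≤ 1 + (ball 0 1).indicator (fun y => ‖y‖ₑ⁻¹ ^ t) x := by
  by_cases hx : x ∈ ball 0 1
  · simp [indicator_of_mem hx]
  · rw [indicator_of_notMem hx, add_zero]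
    have : 1 ≤ ‖x‖ₑ := by
      rw [mem_ball_zero_iff, not_lt] at hx
      rw [← ofReal_norm, ← ENNReal.ofReal_one]
      exact ENNReal.ofReal_le_ofReal hx
    exact ENNReal.rpow_le_one (ENNReal.inv_le_one.mpr this) ht

theorem setLIntegral_enorm_sub_inv_rpow_le {G : Type*} [NormedAddCommGroup G]
    [MeasurableSpace G] [BorelSpace G] {μ : Measure G} [μ.IsAddRightInvariant] {t : ℝ}
    (ht : 0 ≤ t) (w : G) (C : Set G) :
    ∫⁻ z in C, ‖z - w‖ₑ⁻¹ ^ t ∂μ ≤ μ C + ∫⁻ x in ball 0 1, ‖x‖ₑ⁻¹ ^ t ∂μ := by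
  have hmeas : Measurable ((ball (0 : G) 1).indicator fun y => ‖y‖ₑ⁻¹ ^ t) :=
    (by fun_prop : Measurable fun y : G => ‖y‖ₑ⁻¹ ^ t).indicator measurableSet_ball
  calc ∫⁻ z in C, ‖z - w‖ₑ⁻¹ ^ t ∂μ
      ≤ ∫⁻ z in C, (1 + (ball 0 1).indicator (fun y => ‖y‖ₑ⁻¹ ^ t) (z - w)) ∂μ :=
        lintegral_mono fun z => enorm_inv_rpow_le_one_add_indicator ht (z - w)
    _ ≤ μ C + ∫⁻ z, (ball 0 1).indicator (fun y => ‖y‖ₑ⁻¹ ^ t) (z - w) ∂μ := by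
        rw [lintegral_add_left measurable_const, setLIntegral_const, one_mul]
        gcongr
        exact Measure.restrict_le_self
    _ = μ C + ∫⁻ x in ball 0 1, ‖x‖ₑ⁻¹ ^ t ∂μ := by
        rw [lintegral_sub_right_eq_self _ w, lintegral_indicator measurableSet_ball]

noncomputable def invDistPotential {E : Type*} [NormedAddCommGroup E] [MeasurableSpace E]
    (ν : Measure E) (z : E) : ℝ≥0∞ :=
  ∫⁻ w, ‖w - z‖ₑ⁻¹ ∂ν

theorem measurable_invDistPotential {E : Type*} [NormedAddCommGroup E] [MeasurableSpace E]
    [OpensMeasurableSpace E] [SecondCountableTopology E] (ν : Measure E) [SFinite ν] :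
    Measurable (invDistPotential ν) :=
  Measurable.lintegral_prod_right' (f := fun p : E × E => ‖p.2 - p.1‖ₑ⁻¹) (by fun_prop)

section HaarMeasure

variable {E : Type*} [NormedAddCommGroup E] [NormedSpace ℝ E] [FiniteDimensional ℝ E]
  [MeasurableSpace E] [BorelSpace E] {μ : Measure E} [μ.IsAddHaarMeasure]
  (ν : Measure E) [IsFiniteMeasure ν]

theorem lintegral_ball_enorm_inv_rpow_lt_top {t : ℝ} (ht0 : 0 ≤ t)
    (ht : t < Module.finrank ℝ E) (r : ℝ) :
    ∫⁻ x in ball 0 r, ‖x‖ₑ⁻¹ ^ t ∂μ < ∞ := by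
  have hd : 1 ≤ Module.finrank ℝ E := by
    have : (0 : ℝ) < Module.finrank ℝ E := ht0.trans_lt ht
    exact_mod_cast this
  have : Nontrivial E := Module.nontrivial_of_finrank_pos (R := ℝ) hd
  have hint : IntegrableOn (fun x : E => ‖x‖ ^ (-t)) (ball 0 r) μ :=
    integrableOn_ball_of_norm_le_rpow (C := 1) hd ht
      (Eventually.of_forall fun x => by
        simp [abs_of_nonneg (Real.rpow_nonneg (norm_nonneg x) _)])
      ((measurable_norm.pow_const _).aestronglyMeasurable)
  refine lt_of_eq_of_lt (lintegral_congr_ae ?_) hint.2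
  have hnull : ∀ᵐ x ∂μ, x ≠ 0 := measure_eq_zero_iff_ae_notMem.mp (measure_singleton 0)
  filter_upwards [ae_restrict_of_ae hnull] with x hx
  rw [Real.enorm_eq_ofReal (Real.rpow_nonneg (norm_nonneg x) _),
    ← ENNReal.ofReal_rpow_of_pos (norm_pos_iff.mpr hx), ofReal_norm,
    ENNReal.rpow_neg, ENNReal.inv_rpow]

theorem setLIntegral_invDistPotential_rpow_lt_top {t : ℝ} (ht1 : 1 ≤ t)
    (ht : t < Module.finrank ℝ E) {C : Set E} (hC : μ C ≠ ∞) :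
    ∫⁻ z in C, invDistPotential ν z ^ t ∂μ < ∞ := by
  have ht0 : 0 ≤ t := zero_le_one.trans ht1
  calc ∫⁻ z in C, invDistPotential ν z ^ t ∂μ
      ≤ ∫⁻ z in C, ν univ ^ (t - 1) * ∫⁻ w, ‖w - z‖ₑ⁻¹ ^ t ∂ν ∂μ :=
        lintegral_mono fun z =>
          rpow_lintegral_le_measure_univ_rpow_mul_lintegral_rpow (by fun_prop) ht1
    _ = ν univ ^ (t - 1) * ∫⁻ w, ∫⁻ z in C, ‖z - w‖ₑ⁻¹ ^ t ∂μ ∂ν := by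
        rw [lintegral_const_mul' _ _ (by finiteness), lintegral_lintegral_swap (by fun_prop)]
        simp only [enorm_sub_rev]
    _ ≤ ν univ ^ (t - 1) * ∫⁻ _, (μ C + ∫⁻ x in ball 0 1, ‖x‖ₑ⁻¹ ^ t ∂μ) ∂ν := by
        gcongr with w
        exact setLIntegral_enorm_sub_inv_rpow_le ht0 w C
    _ < ∞ := by
        rw [lintegral_const]
        have := lintegral_ball_enorm_inv_rpow_lt_top (μ := μ) ht0 ht 1
        finiteness

theorem ae_invDistPotential_lt_top (hE : 1 < Module.finrank ℝ E) :
    ∀ᵐ z ∂μ, invDistPotential ν z < ∞ := by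
  refine ae_of_forall_measure_lt_top_ae_restrict _ fun C _ hC => ae_lt_top
    (measurable_invDistPotential ν) (ne_of_lt ?_)
  simpa using setLIntegral_invDistPotential_rpow_lt_top ν le_rfl (by exact_mod_cast hE) hC.ne

end HaarMeasure

theorem lintegral_enorm_inv_sub_mul_le_invDistPotential (μ : Measure ℂ) {g : ℂ → ℂ}
    (hg : AEMeasurable g μ) (z : ℂ) :
    ∫⁻ w, ‖(w - z)⁻¹ * g w‖ₑ ∂μ ≤ invDistPotential (μ.withDensity fun w => ‖g w‖ₑ) z := by
  rw [invDistPotential, lintegral_withDensity_eq_lintegral_mul₀ hg.enorm (by fun_prop)]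
  refine lintegral_mono fun w => ?_
  rw [enorm_mul, mul_comm, Pi.mul_apply]
  rcases eq_or_ne (w - z) 0 with hwz | hwz
  · simp [hwz]
  · rw [enorm_inv hwz]

theorem aestronglyMeasurable_integral_inv_sub_mul {μ : Measure ℂ} [SFinite μ] {g : ℂ → ℂ}
    (hg : AEStronglyMeasurable g μ) (ρ : Measure ℂ) [SFinite ρ] :
    AEStronglyMeasurable (fun z => ∫ w, (w - z)⁻¹ * g w ∂μ) ρ :=
  AEStronglyMeasurable.integral_prod_right' (f := fun p : ℂ × ℂ => (p.2 - p.1)⁻¹ * g p.2)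
    ((measurable_snd.sub measurable_fst).inv.aestronglyMeasurable.mul
      (hg.comp_quasiMeasurePreserving Measure.quasiMeasurePreserving_snd))

theorem cauchy_transform_ae_exists_and_locally_Ls_general
    (μ : Measure ℂ) [IsFiniteMeasure μ] (g : ℂ → ℂ) (hg : Integrable g μ)
    (s : ℝ) (hs0 : 0 < s) (hs2 : s < 2) :
    ∃ F : ℂ → ℂ,
      (∀ᵐ z ∂(volume : Measure ℂ),
        Tendsto (fun ε : ℝ => ∫ w in {w : ℂ | ε < ‖w - z‖}, (w - z)⁻¹ * g w ∂μ)
          (𝓝[>] (0 : ℝ)) (𝓝 (F z))) ∧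
      ∀ C : Set ℂ, IsCompact C → IntegrableOn (fun z => ‖F z‖ ^ s) C volume := by
  set ν := μ.withDensity fun w => ‖g w‖ₑ
  have : IsFiniteMeasure ν := isFiniteMeasure_withDensity hg.2.ne
  have hdim : (Module.finrank ℝ ℂ : ℝ) = 2 := by simp
  have hdim1 : 1 < Module.finrank ℝ ℂ := by simp
  have hbound := lintegral_enorm_inv_sub_mul_le_invDistPotential μ hg.1.aemeasurable
  refine ⟨fun z => ∫ w, (w - z)⁻¹ * g w ∂μ, ?_, fun C hC => ?_⟩
  · filter_upwards [ae_invDistPotential_lt_top ν (μ := volume) hdim1] with z hz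
    refine tendsto_setIntegral_norm_sub_gt ⟨?_, (hbound z).trans_lt hz⟩ (by simp)
    exact (measurable_id.sub_const z).inv.aestronglyMeasurable.mul hg.1
  · exact integrableOn_norm_rpow_of_enorm_le hC.measure_lt_top.ne
      (aestronglyMeasurable_integral_inv_sub_mul hg.1 _).restrict
      (fun z => (enorm_integral_le_lintegral_enorm _).trans (hbound z)) hs0 (le_max_left s 1)
      (setLIntegral_invDistPotential_rpow_lt_top ν (le_max_right s 1)
        (hdim ▸ max_lt hs2 one_lt_two) hC.measure_lt_top.ne)

/-- A finite complex Borel measure with compact support is represented as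
`g · μ` with `μ` a finite positive measure supported in a compact set `K` and `g`
an integrable complex density.  Its principal value Cauchy transform exists for
Lebesgue-almost every `z ∈ ℂ` and belongs to `L^s_loc(ℂ)` for `0 < s < 2`. -/
theorem cauchy_transform_ae_exists_and_locally_Ls
    (μ : Measure ℂ) [IsFiniteMeasure μ] (g : ℂ → ℂ) (hg : Integrable g μ)
    (K : Set ℂ) (hK : IsCompact K) (hsupp : μ Kᶜ = 0)
    (s : ℝ) (hs0 : 0 < s) (hs2 : s < 2) :
    ∃ F : ℂ → ℂ,
      (∀ᵐ z ∂(volume : Measure ℂ),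
        Tendsto (fun ε : ℝ => ∫ w in {w : ℂ | ε < ‖w - z‖}, (w - z)⁻¹ * g w ∂μ)
          (𝓝[>] (0 : ℝ)) (𝓝 (F z))) ∧
      ∀ C : Set ℂ, IsCompact C → IntegrableOn (fun z => ‖F z‖ ^ s) C volume :=
  cauchy_transform_ae_exists_and_locally_Ls_general μ g hg s hs0 hs2
end

section
/- Let 0 < β < 1/16, let λ₀ ∈ 𝔻 and λ ∈ ℂ with |λ − λ₀| ≤ 4β(1 − |λ₀|). Then for every z on the unit circle 𝕋, |1 − λ·conj(λ₀)| / |z − λ| ≤ ((1+4β)/(1−4β)) · (1 − |λ₀|²) / |1 − conj(λ₀)·z|. -/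
open Complex

/-! On the unit circle `|1 - conj(λ₀) z| = |z - λ₀|`, and `|z - λ₀| ≥ 1 - |λ₀|` dominates
`|λ - λ₀| / 4β`; so moving `λ₀` to `λ` shrinks the denominator `|z - λ₀|` by at most a factor
`1 - 4β` and enlarges the numerator `|1 - λ₀ conj(λ₀)| = 1 - |λ₀|²` by at most a factor `1 + 4β`. -/

theorem norm_one_sub_conj_mul_eq_norm_sub {a z : ℂ} (hz : ‖z‖ = 1) :
    ‖1 - starRingEnd ℂ a * z‖ = ‖z - a‖ := by
  have hzz : z * starRingEnd ℂ z = 1 := by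
    rw [mul_conj, normSq_eq_norm_sq, hz, one_pow, ofReal_one]
  have : 1 - starRingEnd ℂ a * z = z * starRingEnd ℂ (z - a) := by
    rw [map_sub, mul_sub, hzz]; ring
  rw [this, norm_mul, hz, one_mul, RCLike.norm_conj]

theorem norm_one_sub_mul_conj_self {a : ℂ} (ha : ‖a‖ ≤ 1) :
    ‖1 - a * starRingEnd ℂ a‖ = 1 - ‖a‖ ^ 2 := by
  rw [mul_conj, normSq_eq_norm_sq, ← ofReal_one, ← ofReal_sub, norm_real, Real.norm_eq_abs,
    abs_of_nonneg (by nlinarith [norm_nonneg a])]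

theorem norm_one_sub_mul_conj_le {l₀ l : ℂ} {c : ℝ} (hl₀ : ‖l₀‖ ≤ 1)
    (hl : ‖l - l₀‖ ≤ c * (1 - ‖l₀‖)) :
    ‖1 - l * starRingEnd ℂ l₀‖ ≤ (1 + c) * (1 - ‖l₀‖ ^ 2) := by
  have hr := norm_nonneg l₀
  have hc : 0 ≤ c * (1 - ‖l₀‖) := (norm_nonneg _).trans hl
  calc ‖1 - l * starRingEnd ℂ l₀‖
      = ‖(1 - l₀ * starRingEnd ℂ l₀) - (l - l₀) * starRingEnd ℂ l₀‖ := by ring_nf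
    _ ≤ ‖1 - l₀ * starRingEnd ℂ l₀‖ + ‖(l - l₀) * starRingEnd ℂ l₀‖ := norm_sub_le _ _
    _ = (1 - ‖l₀‖ ^ 2) + ‖l - l₀‖ * ‖l₀‖ := by
        rw [norm_one_sub_mul_conj_self hl₀, norm_mul, RCLike.norm_conj]
    _ ≤ (1 - ‖l₀‖ ^ 2) + c * (1 - ‖l₀‖) * ‖l₀‖ := by gcongr
    _ ≤ (1 + c) * (1 - ‖l₀‖ ^ 2) := by nlinarith

theorem one_sub_norm_le_norm_sub {a z : ℂ} (hz : ‖z‖ = 1) : 1 - ‖a‖ ≤ ‖z - a‖ :=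
  hz ▸ norm_sub_norm_le z a

theorem one_sub_mul_norm_sub_le {l₀ l z : ℂ} {c : ℝ} (hc : 0 ≤ c) (hz : ‖z‖ = 1)
    (hl : ‖l - l₀‖ ≤ c * (1 - ‖l₀‖)) :
    (1 - c) * ‖z - l₀‖ ≤ ‖z - l‖ := by
  have hl' : ‖l - l₀‖ ≤ c * ‖z - l₀‖ :=
    hl.trans (mul_le_mul_of_nonneg_left (one_sub_norm_le_norm_sub hz) hc)
  have := norm_sub_norm_le (z - l₀) (l - l₀)
  rw [sub_sub_sub_cancel_right] at this
  linarith

theorem kernel_quotient_estimate_general (β : ℝ) (hβ : β < 1/16)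
    (l₀ l z : ℂ) (hl₀ : ‖l₀‖ < 1) (hl : ‖l - l₀‖ ≤ 4 * β * (1 - ‖l₀‖))
    (hz : ‖z‖ = 1) :
    ‖1 - l * (starRingEnd ℂ) l₀‖ / ‖z - l‖ ≤
      ((1 + 4*β) / (1 - 4*β)) * ((1 - ‖l₀‖^2) / ‖1 - (starRingEnd ℂ) l₀ * z‖) := by
  have hβ0 : 0 ≤ 4 * β :=
    nonneg_of_mul_nonneg_left ((norm_nonneg _).trans hl) (sub_pos.2 hl₀)
  have hβ1 : 0 < 1 - 4 * β := by linarith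
  have hD : 0 < ‖z - l₀‖ := (sub_pos.2 hl₀).trans_le (one_sub_norm_le_norm_sub hz)
  have hnum := norm_one_sub_mul_conj_le hl₀.le hl
  rw [norm_one_sub_conj_mul_eq_norm_sub hz, ← mul_div_mul_comm]
  exact div_le_div₀ ((norm_nonneg _).trans hnum) hnum (mul_pos hβ1 hD)
    (one_sub_mul_norm_sub_le hβ0 hz hl)

/-- for `0 < β < 1/16`, `λ₀ ∈ 𝔻`, `|λ − λ₀| ≤ 4β(1 − |λ₀|)` and `z ∈ 𝕋`,
`|1 − λ conj(λ₀)| / |z − λ| ≤ ((1+4β)/(1−4β)) (1 − |λ₀|²)/|1 − conj(λ₀) z|`. -/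
theorem kernel_quotient_estimate (β : ℝ) (hβ0 : 0 < β) (hβ : β < 1/16)
    (l₀ l z : ℂ) (hl₀ : ‖l₀‖ < 1) (hl : ‖l - l₀‖ ≤ 4 * β * (1 - ‖l₀‖))
    (hz : ‖z‖ = 1) :
    ‖1 - l * (starRingEnd ℂ) l₀‖ / ‖z - l‖ ≤
      ((1 + 4*β) / (1 - 4*β)) * ((1 - ‖l₀‖^2) / ‖1 - (starRingEnd ℂ) l₀ * z‖) :=
  kernel_quotient_estimate_general β hβ l₀ l z hl₀ hl hz
end

section
/- Let h ∈ L¹(m) with h ≥ 0 on the unit circle 𝕋. Then for m-almost every e^{iθ} ∈ 𝕋, the Poisson integral ∫_𝕋 (1 − |λ|²)/|1 − conj(λ)z|² h(z) dm(z) converges to h(e^{iθ}) as λ → e^{iθ} nontangentially, i.e., with λ restricted to the region Γ_{1/4}(e^{iθ}) (the convex hull of {e^{iθ}} and the disk {|z| ≤ 1/4}). -/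
/-!
At a Lebesgue point `θ` of `g s = h (exp (s * I))` (almost every `θ`, by the Lebesgue
differentiation theorem), `∫ P_λ = 2π` turns the error into
`(2π)⁻¹ ∫_{-π}^{π} P_λ(e^{i(θ+t)}) (g (θ + t) - g θ) dt`. In `Γ_{1/4}(e^{iθ})` one has
`1 - |λ| ≥ (3/5) ρ` with `ρ = |λ - e^{iθ}|`, which yields the majorant
`P_λ(e^{i(θ+t)}) ≤ 125 ρ / (ρ + |t|)^2`. Summing this majorant over the dyadic annuli
`|t| ~ 2^k ρ` up to a fixed scale `δ₀` bounds the error by a multiple of `ε` plus `O(ρ / δ₀^2)`.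
-/

open Complex MeasureTheory Filter Topology Set

/-- The nontangential approach region `Γ_σ(w)`: the convex hull of the point `w`
and the closed disk `{|z| ≤ σ}`. -/
def stolzRegion (σ : ℝ) (w : ℂ) : Set ℂ :=
  convexHull ℝ ({w} ∪ Metric.closedBall 0 σ)

lemma poissonKernel_nonneg {c w z : ℂ} (h : ‖w - c‖ ≤ ‖z - c‖) : 0 ≤ poissonKernel c w z := by
  rw [poissonKernel_def]
  have := pow_le_pow_left₀ (norm_nonneg _) h 2
  exact div_nonneg (by linarith) (sq_nonneg _)

lemma poissonKernel_zero_eq_of_norm_eq_one {z : ℂ} (hz : ‖z‖ = 1) (l : ℂ) :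
    poissonKernel 0 l z = (1 - ‖l‖ ^ 2) / ‖1 - starRingEnd ℂ l * z‖ ^ 2 := by
  have hzz : z * starRingEnd ℂ z = 1 := by
    rw [mul_conj, normSq_eq_norm_sq, hz]; norm_num
  have hden : ‖1 - starRingEnd ℂ l * z‖ = ‖z - l‖ := by
    calc ‖1 - starRingEnd ℂ l * z‖ = ‖z * starRingEnd ℂ (z - l)‖ := by
          rw [map_sub, mul_sub, hzz, mul_comm]
      _ = ‖z - l‖ := by rw [norm_mul, hz, one_mul, RCLike.norm_conj]
  simp only [poissonKernel_def, sub_zero, hz, one_pow, hden]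

lemma continuous_poissonKernel_circleMap {c w : ℂ} {R : ℝ} (hw : w ∈ Metric.ball c R) :
    Continuous fun θ => poissonKernel c w (circleMap c R θ) := by
  simp_rw [poissonKernel_def, sub_sub_sub_cancel_right]
  refine Continuous.div (by fun_prop) (by fun_prop) fun θ => ?_
  have := circleMap_mem_sphere' c R θ
  rw [Metric.mem_sphere] at this
  rw [Metric.mem_ball] at hw
  have : circleMap c R θ ≠ w := by rintro h; rw [h] at this; linarith [le_abs_self R]
  simpa [sub_eq_zero] using this

/-- The Poisson integral formula for the constant function `1`. -/
lemma integral_poissonKernel_circleMap {c w : ℂ} {R : ℝ} (hw : w ∈ Metric.ball c R) :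
    ∫ θ in 0..2 * Real.pi, poissonKernel c w (circleMap c R θ) = 2 * Real.pi := by
  have h := (diffContOnCl_const (c := (1 : ℂ))).circleAverage_poissonKernel_smul hw
  simp only [Real.circleAverage_def, Pi.smul_apply', mul_one, intervalIntegral.integral_ofReal,
    Complex.real_smul] at h
  have : (2 * Real.pi)⁻¹ * ∫ θ in 0..2 * Real.pi, poissonKernel c w (circleMap c R θ) = 1 := by
    exact_mod_cast h
  field_simp at this
  linarith

lemma mul_norm_sub_le_of_mem_stolzRegion {σ : ℝ} (hσ₀ : 0 ≤ σ) (hσ₁ : σ ≤ 1) {w l : ℂ}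
    (hw : ‖w‖ ≤ 1) (hl : l ∈ stolzRegion σ w) : (1 - σ) * ‖l - w‖ ≤ (1 + σ) * (1 - ‖l‖) := by
  rw [stolzRegion, singleton_union, convexHull_insert ⟨0, by simpa using hσ₀⟩,
    (convex_closedBall _ _).convexHull_eq, mem_convexJoin] at hl
  obtain ⟨a, ha, b, hb, p, t, hp, ht, hpt, rfl⟩ := hl
  rw [mem_singleton_iff] at ha
  rw [mem_closedBall_zero_iff] at hb
  subst ha
  obtain rfl : p = 1 - t := by linarith
  have hdist : ‖(1 - t) • a + t • b - a‖ ≤ t * (1 + σ) := by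
    calc ‖(1 - t) • a + t • b - a‖ = ‖t • (b - a)‖ := by congr 1; module
      _ ≤ t * (‖b‖ + ‖a‖) := by
          rw [norm_smul, Real.norm_of_nonneg ht]; gcongr; exact norm_sub_le _ _
      _ ≤ t * (σ + 1) := by gcongr
      _ = t * (1 + σ) := by ring
  have hnorm : ‖(1 - t) • a + t • b‖ ≤ 1 - t * (1 - σ) := by
    calc ‖(1 - t) • a + t • b‖ ≤ (1 - t) * ‖a‖ + t * ‖b‖ := by
          refine (norm_add_le _ _).trans_eq ?_
          rw [norm_smul, norm_smul, Real.norm_of_nonneg hp, Real.norm_of_nonneg ht]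
      _ ≤ (1 - t) * 1 + t * σ := by gcongr
      _ = 1 - t * (1 - σ) := by ring
  nlinarith

lemma poissonKernel_zero_le_of_cone {w l z : ℂ} (hw : ‖w‖ = 1) (hz : ‖z‖ = 1) (hlw : l ≠ w)
    (hcone : 3 * ‖l - w‖ ≤ 5 * (1 - ‖l‖)) :
    poissonKernel 0 l z ≤ 50 * ‖l - w‖ / (‖l - w‖ + ‖z - w‖) ^ 2 := by
  set ρ := ‖l - w‖
  set d := ‖z - w‖
  have hρ : 0 < ρ := norm_pos_iff.2 (sub_ne_zero.2 hlw)
  have hl : 1 - ‖l‖ ≤ ρ := by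
    have := norm_sub_norm_le w l; rw [hw, norm_sub_rev] at this; exact this
  have hnum : 1 - ‖l‖ ^ 2 ≤ 2 * ρ := by nlinarith [norm_nonneg l]
  have hzl₁ : 1 - ‖l‖ ≤ ‖z - l‖ := by
    have := norm_sub_norm_le z l; rwa [hz] at this
  have hzl₂ : d - ρ ≤ ‖z - l‖ := by
    linarith [norm_sub_le_norm_sub_add_norm_sub z l w]
  have hden : (ρ + d) / 5 ≤ ‖z - l‖ := by
    rcases le_total d (2 * ρ) with h | h <;> linarith
  simp only [poissonKernel_def, sub_zero, hz, one_pow]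
  calc (1 - ‖l‖ ^ 2) / ‖z - l‖ ^ 2 ≤ 2 * ρ / ((ρ + d) / 5) ^ 2 := by
        gcongr
    _ = 50 * ρ / (ρ + d) ^ 2 := by field_simp; ring

lemma two_div_pi_mul_abs_le_norm_circleMap_sub (c : ℂ) (R θ : ℝ) {t : ℝ} (ht : |t| ≤ Real.pi) :
    2 / Real.pi * |R| * |t| ≤ ‖circleMap c R (θ + t) - circleMap c R θ‖ := by
  have hfac : circleMap c R (θ + t) - circleMap c R θ = R * exp (θ * I) * (exp (t * I) - 1) := by
    simp only [circleMap, ofReal_add, add_mul, Complex.exp_add]; ring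
  rw [hfac, norm_mul, norm_mul, norm_exp_ofReal_mul_I, norm_real, mul_comm (t : ℂ),
    norm_exp_I_mul_ofReal_sub_one, norm_mul, Real.norm_two, Real.norm_eq_abs, Real.norm_eq_abs,
    mul_one]
  have := Real.mul_abs_le_abs_sin (x := t / 2) (by rw [abs_div, abs_two]; linarith)
  rw [abs_div, abs_two] at this
  nlinarith [abs_nonneg R]

lemma poissonKernel_circleMap_add_le {θ t : ℝ} {l : ℂ} (ht : |t| ≤ Real.pi)
    (hl : l ∈ stolzRegion (1/4) (circleMap 0 1 θ)) (hlw : l ≠ circleMap 0 1 θ) :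
    poissonKernel 0 l (circleMap 0 1 (θ + t)) ≤
      125 * (‖l - circleMap 0 1 θ‖ / (‖l - circleMap 0 1 θ‖ + |t|) ^ 2) := by
  set w := circleMap 0 1 θ
  set ρ := ‖l - w‖
  have hρ : 0 < ρ := norm_pos_iff.2 (sub_ne_zero.2 hlw)
  have hnorm : ∀ s, ‖circleMap 0 1 s‖ = 1 := by simp [norm_circleMap_zero]
  have hcone := mul_norm_sub_le_of_mem_stolzRegion (by norm_num) (by norm_num) (hnorm θ).le hl
  have hchord := two_div_pi_mul_abs_le_norm_circleMap_sub 0 1 θ ht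
  rw [abs_one, mul_one] at hchord
  have hπ : 2 / Real.pi ≤ 1 := (div_le_one Real.pi_pos).2 Real.two_le_pi
  have hsum : 2 / Real.pi * (ρ + |t|) ≤ ρ + ‖circleMap 0 1 (θ + t) - w‖ := by
    nlinarith [abs_nonneg t]
  have hπ10 : Real.pi ^ 2 ≤ 10 := by nlinarith [Real.pi_lt_d2, Real.pi_pos]
  calc poissonKernel 0 l (circleMap 0 1 (θ + t))
      ≤ 50 * ρ / (ρ + ‖circleMap 0 1 (θ + t) - w‖) ^ 2 :=
        poissonKernel_zero_le_of_cone (hnorm θ) (hnorm _) hlw (by linarith)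
    _ ≤ 50 * ρ / (2 / Real.pi * (ρ + |t|)) ^ 2 := by gcongr
    _ = Real.pi ^ 2 / 4 * 50 * (ρ / (ρ + |t|) ^ 2) := by field_simp; norm_num
    _ ≤ 125 * (ρ / (ρ + |t|) ^ 2) := by gcongr; linarith

lemma intervalIntegral_mul_le_const_mul {K φ : ℝ → ℝ} {a b c : ℝ} (hab : a ≤ b)
    (hK : Continuous K) (hKc : ∀ t ∈ Icc a b, K t ≤ c)
    (hφ : IntervalIntegrable φ volume a b) (hφ₀ : ∀ t, 0 ≤ φ t) :
    ∫ t in a..b, K t * φ t ≤ c * ∫ t in a..b, φ t := by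
  rw [← intervalIntegral.integral_const_mul]
  exact intervalIntegral.integral_mono_on hab (hφ.continuousOn_mul hK.continuousOn)
    (hφ.const_mul c) fun t ht => mul_le_mul_of_nonneg_right (hKc t ht) (hφ₀ t)

lemma continuous_div_add_abs_sq {ρ : ℝ} (hρ : 0 < ρ) :
    Continuous fun t : ℝ => ρ / (ρ + |t|) ^ 2 :=
  continuous_const.div (by fun_prop) fun t => by positivity

lemma integral_neg_to_self_eq_integral_add_comp_neg {f : ℝ → ℝ}
    (hf : ∀ a b, IntervalIntegrable f volume a b) (a : ℝ) :
    ∫ t in -a..a, f t = ∫ t in 0..a, (f t + f (-t)) := by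
  rw [← intervalIntegral.integral_add_adjacent_intervals (hf (-a) 0) (hf 0 a),
    intervalIntegral.integral_add (hf 0 a)
      (by simpa using (IntervalIntegrable.iff_comp_neg).mp (hf 0 (-a))),
    intervalIntegral.integral_comp_neg, neg_zero, add_comm]

section KernelEstimate

variable {φ : ℝ → ℝ} {ε ρ δ₀ : ℝ}

/-- The induction runs over the dyadic annuli `[2^N ρ, 2^(N+1) ρ]`; on the `N`-th one the kernel
is at most `ρ / (2^N ρ)^2` while `φ` has mass at most `ε 2^(N+1) ρ`. -/
lemma integral_div_add_abs_sq_mul_le_of_two_pow_mul_le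
    (hφ : ∀ a b, IntervalIntegrable φ volume a b) (hφ₀ : ∀ t, 0 ≤ φ t) (hρ : 0 < ρ)
    (hφδ : ∀ δ ∈ Ioc 0 δ₀, ∫ t in 0..δ, φ t ≤ ε * δ) (N : ℕ) (hN : 2 ^ N * ρ ≤ δ₀) :
    ∫ t in 0..2 ^ N * ρ, ρ / (ρ + |t|) ^ 2 * φ t ≤ ε * (5 - 4 / 2 ^ N) := by
  induction N with
  | zero =>
    rw [pow_zero, one_mul] at hN ⊢
    calc ∫ t in 0..ρ, ρ / (ρ + |t|) ^ 2 * φ t ≤ ρ⁻¹ * ∫ t in 0..ρ, φ t := by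
          refine intervalIntegral_mul_le_const_mul hρ.le (continuous_div_add_abs_sq hρ)
            (fun t _ => ?_) (hφ 0 ρ) hφ₀
          rw [div_le_iff₀ (by positivity), inv_mul_eq_div, le_div_iff₀ hρ]
          nlinarith [abs_nonneg t]
      _ ≤ ρ⁻¹ * (ε * ρ) := by gcongr; exact hφδ ρ ⟨hρ, hN⟩
      _ = ε * (5 - 4 / 2 ^ 0) := by field_simp; ring
  | succ N ih =>
    set a := 2 ^ N * ρ
    have ha : 0 < a := by positivity
    have hsucc : 2 ^ (N + 1) * ρ = 2 * a := by rw [pow_succ]; ring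
    rw [hsucc] at hN ⊢
    have hannulus : ∫ t in a..2 * a, ρ / (ρ + |t|) ^ 2 * φ t ≤ ε * (2 / 2 ^ N) :=
      calc ∫ t in a..2 * a, ρ / (ρ + |t|) ^ 2 * φ t ≤ ρ / a ^ 2 * ∫ t in a..2 * a, φ t := by
            refine intervalIntegral_mul_le_const_mul (by linarith) (continuous_div_add_abs_sq hρ)
              (fun t ht => ?_) (hφ _ _) hφ₀
            gcongr
            linarith [ht.1, le_abs_self t]
        _ ≤ ρ / a ^ 2 * (ε * (2 * a)) := by
            gcongr
            exact (intervalIntegral.integral_mono_interval ha.le (by linarith) le_rfl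
              (.of_forall hφ₀) (hφ _ _)).trans
              (hφδ _ ⟨by linarith, hN⟩)
        _ = ε * (2 / 2 ^ N) := by simp only [a]; field_simp
    have hsplit : ε * (5 - 4 / 2 ^ (N + 1)) = ε * (5 - 4 / 2 ^ N) + ε * (2 / 2 ^ N) := by
      rw [pow_succ]; field_simp; ring
    rw [← intervalIntegral.integral_add_adjacent_intervals
      ((hφ 0 a).continuousOn_mul (continuous_div_add_abs_sq hρ).continuousOn)
      ((hφ a _).continuousOn_mul (continuous_div_add_abs_sq hρ).continuousOn)]
    linarith [ih (by linarith)]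

lemma integral_zero_to_div_add_abs_sq_mul_le
    (hφ : ∀ a b, IntervalIntegrable φ volume a b) (hφ₀ : ∀ t, 0 ≤ φ t) (hρ : 0 < ρ)
    (hρδ : ρ ≤ δ₀) (hφδ : ∀ δ ∈ Ioc 0 δ₀, ∫ t in 0..δ, φ t ≤ ε * δ) {L : ℝ} (hδL : δ₀ ≤ L) :
    ∫ t in 0..L, ρ / (ρ + |t|) ^ 2 * φ t ≤ 5 * ε + 4 * ρ / δ₀ ^ 2 * ∫ t in 0..L, φ t := by
  obtain ⟨N, hN, hN'⟩ := exists_nat_pow_near ((one_le_div hρ).2 hρδ) one_lt_two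
  rw [le_div_iff₀ hρ] at hN
  rw [div_lt_iff₀ hρ, pow_succ] at hN'
  set b := 2 ^ N * ρ
  have hb : 0 < b := by positivity
  have hδ₀ : 0 < δ₀ := hρ.trans_le hρδ
  have hε : 0 ≤ ε := by
    have := (intervalIntegral.integral_nonneg hρ.le fun t _ => hφ₀ t).trans (hφδ ρ ⟨hρ, hρδ⟩)
    exact nonneg_of_mul_nonneg_left this hρ
  have hnear := integral_div_add_abs_sq_mul_le_of_two_pow_mul_le hφ hφ₀ hρ hφδ N hN
  have hfar : ∫ t in b..L, ρ / (ρ + |t|) ^ 2 * φ t ≤ 4 * ρ / δ₀ ^ 2 * ∫ t in 0..L, φ t :=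
    calc ∫ t in b..L, ρ / (ρ + |t|) ^ 2 * φ t ≤ 4 * ρ / δ₀ ^ 2 * ∫ t in b..L, φ t := by
          refine intervalIntegral_mul_le_const_mul (by linarith) (continuous_div_add_abs_sq hρ)
            (fun t ht => ?_) (hφ _ _) hφ₀
          have hδ : δ₀ ≤ 2 * (ρ + |t|) := by linarith [ht.1, le_abs_self t]
          rw [div_le_div_iff₀ (by positivity) (by positivity)]
          nlinarith [mul_le_mul hδ hδ hδ₀.le (by positivity)]
      _ ≤ 4 * ρ / δ₀ ^ 2 * ∫ t in 0..L, φ t := by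
          gcongr
          exact intervalIntegral.integral_mono_interval hb.le (by linarith) le_rfl
            (.of_forall hφ₀) (hφ _ _)
  rw [← intervalIntegral.integral_add_adjacent_intervals
    ((hφ 0 b).continuousOn_mul (continuous_div_add_abs_sq hρ).continuousOn)
    ((hφ b L).continuousOn_mul (continuous_div_add_abs_sq hρ).continuousOn)]
  have : ε * (5 - 4 / 2 ^ N) ≤ 5 * ε := by
    have : 0 ≤ ε * (4 / 2 ^ N) := by positivity
    linarith [mul_sub ε 5 (4 / 2 ^ N)]
  linarith

lemma integral_div_add_abs_sq_mul_le
    (hφ : ∀ a b, IntervalIntegrable φ volume a b) (hφ₀ : ∀ t, 0 ≤ φ t) (hρ : 0 < ρ)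
    (hρδ : ρ ≤ δ₀) (hφδ : ∀ δ ∈ Ioc 0 δ₀, ∫ t in -δ..δ, φ t ≤ ε * δ) {L : ℝ} (hδL : δ₀ ≤ L) :
    ∫ t in -L..L, ρ / (ρ + |t|) ^ 2 * φ t ≤ 5 * ε + 4 * ρ / δ₀ ^ 2 * ∫ t in -L..L, φ t := by
  have hψ : ∀ a b, IntervalIntegrable (fun t => φ t + φ (-t)) volume a b := fun a b =>
    (hφ a b).add (by simpa using (IntervalIntegrable.iff_comp_neg).mp (hφ (-a) (-b)))
  have hKφ : ∀ a b, IntervalIntegrable (fun t => ρ / (ρ + |t|) ^ 2 * φ t) volume a b :=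
    fun a b => (hφ a b).continuousOn_mul (continuous_div_add_abs_sq hρ).continuousOn
  simp_rw [integral_neg_to_self_eq_integral_add_comp_neg hKφ,
    integral_neg_to_self_eq_integral_add_comp_neg hφ,
    abs_neg, ← mul_add]
  refine integral_zero_to_div_add_abs_sq_mul_le hψ (fun t => add_nonneg (hφ₀ t) (hφ₀ (-t))) hρ
    hρδ (fun δ hδ => ?_) hδL
  rw [← integral_neg_to_self_eq_integral_add_comp_neg hφ]
  exact hφδ δ hδ

end KernelEstimate

lemma locallyIntegrable_of_forall_intervalIntegrable {g : ℝ → ℝ}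
    (hg : ∀ a b, IntervalIntegrable g volume a b) : LocallyIntegrable g volume := fun x =>
  ⟨Icc (x - 1) (x + 1), Icc_mem_nhds (by linarith) (by linarith),
    (intervalIntegrable_iff_integrableOn_Icc_of_le (by linarith)).1 (hg _ _)⟩

lemma setAverage_closedBall_abs_sub_eq (g : ℝ → ℝ) (x : ℝ) {δ : ℝ} (hδ : 0 < δ) :
    ⨍ y in Metric.closedBall x δ, |g y - g x| = (2 * δ)⁻¹ * ∫ t in -δ..δ, |g (x + t) - g x| := by
  rw [setAverage_eq, measureReal_def, Real.volume_closedBall, ENNReal.toReal_ofReal (by positivity),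
    smul_eq_mul, Real.closedBall_eq_Icc, integral_Icc_eq_integral_Ioc,
    ← intervalIntegral.integral_of_le (by linarith),
    intervalIntegral.integral_comp_add_left (fun y => |g y - g x|), ← sub_eq_add_neg]

lemma ae_tendsto_inv_mul_integral_abs_sub {g : ℝ → ℝ} (hg : LocallyIntegrable g volume) :
    ∀ᵐ x, Tendsto (fun δ => δ⁻¹ * ∫ t in -δ..δ, |g (x + t) - g x|) (𝓝[>] 0) (𝓝 0) := by
  filter_upwards [IsUnifLocDoublingMeasure.ae_tendsto_average_norm_sub volume hg 1] with x hx
  have hball := hx (fun _ => x) id tendsto_id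
    (eventually_mem_nhdsWithin.mono fun δ (hδ : 0 < δ) => by simp [hδ.le])
  have := hball.const_mul 2
  rw [mul_zero] at this
  refine this.congr' (eventually_mem_nhdsWithin.mono fun δ (hδ : 0 < δ) => ?_)
  simp only [id, Real.norm_eq_abs, setAverage_closedBall_abs_sub_eq g x hδ]
  field_simp

lemma poissonIntegral_sub_eq {g : ℝ → ℝ} (hg : ∀ a b, IntervalIntegrable g volume a b)
    (hper : Function.Periodic g (2 * Real.pi)) {l : ℂ} (hl : ‖l‖ < 1) (θ : ℝ) :
    (2 * Real.pi)⁻¹ * (∫ s in 0..2 * Real.pi, poissonKernel 0 l (circleMap 0 1 s) * g s) - g θ =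
      (2 * Real.pi)⁻¹ * ∫ t in -Real.pi..Real.pi,
        poissonKernel 0 l (circleMap 0 1 (θ + t)) * (g (θ + t) - g θ) := by
  have hl' : l ∈ Metric.ball 0 1 := mem_ball_zero_iff.2 hl
  set P := fun s => poissonKernel 0 l (circleMap 0 1 s)
  have hP : Continuous P := continuous_poissonKernel_circleMap hl'
  have hperF : Function.Periodic (fun s => P s * (g s - g θ)) (2 * Real.pi) := fun s => by
    simp only [P, periodic_circleMap 0 1 s, hper s]
  calc (2 * Real.pi)⁻¹ * (∫ s in 0..2 * Real.pi, P s * g s) - g θ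
      = (2 * Real.pi)⁻¹ * ∫ s in 0..2 * Real.pi, P s * (g s - g θ) := by
        simp_rw [mul_sub]
        rw [intervalIntegral.integral_sub ((hg _ _).continuousOn_mul hP.continuousOn)
          ((hP.intervalIntegrable _ _).mul_const _), intervalIntegral.integral_mul_const,
          integral_poissonKernel_circleMap hl']
        field_simp
    _ = (2 * Real.pi)⁻¹ * ∫ s in θ + -Real.pi..θ + Real.pi, P s * (g s - g θ) := by
        have := hperF.intervalIntegral_add_eq 0 (θ + -Real.pi)
        rw [zero_add, show θ + -Real.pi + 2 * Real.pi = θ + Real.pi by ring] at this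
        rw [this]
    _ = _ := by rw [intervalIntegral.integral_comp_add_left (fun s => P s * (g s - g θ))]

lemma abs_poissonIntegral_sub_le {g : ℝ → ℝ} (hg : ∀ a b, IntervalIntegrable g volume a b)
    (hper : Function.Periodic g (2 * Real.pi)) {θ : ℝ} {l : ℂ}
    (hl : l ∈ stolzRegion (1/4) (circleMap 0 1 θ)) (hlw : l ≠ circleMap 0 1 θ) {ε δ₀ : ℝ}
    (hρδ : ‖l - circleMap 0 1 θ‖ ≤ δ₀) (hδπ : δ₀ ≤ Real.pi)
    (hφδ : ∀ δ ∈ Ioc 0 δ₀, ∫ t in -δ..δ, |g (θ + t) - g θ| ≤ ε * δ) :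
    |(2 * Real.pi)⁻¹ * (∫ s in 0..2 * Real.pi, poissonKernel 0 l (circleMap 0 1 s) * g s) - g θ|
      ≤ 125 * (5 * ε + 4 * ‖l - circleMap 0 1 θ‖ / δ₀ ^ 2 *
          ∫ t in -Real.pi..Real.pi, |g (θ + t) - g θ|) := by
  set ρ := ‖l - circleMap 0 1 θ‖
  set φ := fun t => |g (θ + t) - g θ|
  have hρ : 0 < ρ := norm_pos_iff.2 (sub_ne_zero.2 hlw)
  have hnorm : ∀ s, ‖circleMap 0 1 s‖ = 1 := by simp [norm_circleMap_zero]
  have hl1 : ‖l‖ < 1 := by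
    have := mul_norm_sub_le_of_mem_stolzRegion (by norm_num) (by norm_num) (hnorm θ).le hl
    linarith
  have hP : Continuous fun t => poissonKernel 0 l (circleMap 0 1 (θ + t)) :=
    (continuous_poissonKernel_circleMap (mem_ball_zero_iff.2 hl1)).comp (continuous_const_add θ)
  have hgθ : ∀ a b, IntervalIntegrable (fun t => g (θ + t)) volume a b := fun a b => by
    simpa using (hg (θ + a) (θ + b)).comp_add_left θ
  have hφ : ∀ a b, IntervalIntegrable φ volume a b := fun a b =>
    ((hgθ a b).sub intervalIntegrable_const).abs
  have hπ : 0 < Real.pi := Real.pi_pos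
  rw [poissonIntegral_sub_eq hg hper hl1, abs_mul, abs_of_pos (by positivity)]
  refine (mul_le_of_le_one_left (abs_nonneg _)
    (inv_le_one_of_one_le₀ (by linarith [Real.pi_gt_three]))).trans ?_
  calc |∫ t in -Real.pi..Real.pi, poissonKernel 0 l (circleMap 0 1 (θ + t)) * (g (θ + t) - g θ)|
      ≤ ∫ t in -Real.pi..Real.pi, poissonKernel 0 l (circleMap 0 1 (θ + t)) * φ t := by
        refine (intervalIntegral.abs_integral_le_integral_abs (by linarith)).trans_eq ?_
        refine intervalIntegral.integral_congr fun t _ => ?_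
        have hP₀ : 0 ≤ poissonKernel 0 l (circleMap 0 1 (θ + t)) :=
          poissonKernel_nonneg (by rw [sub_zero, sub_zero, hnorm]; exact hl1.le)
        rw [abs_mul, abs_of_nonneg hP₀]
    _ ≤ ∫ t in -Real.pi..Real.pi, 125 * (ρ / (ρ + |t|) ^ 2 * φ t) := by
        refine intervalIntegral.integral_mono_on (by linarith)
          ((hφ _ _).continuousOn_mul hP.continuousOn)
          (((hφ _ _).continuousOn_mul (continuous_div_add_abs_sq hρ).continuousOn).const_mul _)
          fun t ht => ?_
        rw [← mul_assoc]
        exact mul_le_mul_of_nonneg_right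
          (poissonKernel_circleMap_add_le (abs_le.2 ht) hl hlw) (abs_nonneg _)
    _ ≤ 125 * (5 * ε + 4 * ρ / δ₀ ^ 2 * ∫ t in -Real.pi..Real.pi, φ t) := by
        rw [intervalIntegral.integral_const_mul]
        gcongr
        exact integral_div_add_abs_sq_mul_le hφ (fun t => abs_nonneg _) hρ hρδ hφδ hδπ

lemma exists_forall_le_mul_of_tendsto_inv_mul {F : ℝ → ℝ}
    (hF : Tendsto (fun δ => δ⁻¹ * F δ) (𝓝[>] 0) (𝓝 0)) {ε L : ℝ} (hε : 0 < ε) (hL : 0 < L) :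
    ∃ δ₀ ∈ Ioc 0 L, ∀ δ ∈ Ioc 0 δ₀, F δ ≤ ε * δ := by
  obtain ⟨u, hu, hsub⟩ := mem_nhdsGT_iff_exists_Ioc_subset.1 (hF.eventually (ge_mem_nhds hε))
  refine ⟨min u L, ⟨lt_min hu hL, min_le_right _ _⟩, fun δ hδ => ?_⟩
  have : δ⁻¹ * F δ ≤ ε := hsub ⟨hδ.1, hδ.2.trans (min_le_left _ _)⟩
  rwa [inv_mul_le_iff₀ hδ.1, mul_comm] at this

theorem tendsto_poissonIntegral_nhdsWithin_stolzRegion {g : ℝ → ℝ}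
    (hg : ∀ a b, IntervalIntegrable g volume a b) (hper : Function.Periodic g (2 * Real.pi))
    {θ : ℝ} (hθ : Tendsto (fun δ => δ⁻¹ * ∫ t in -δ..δ, |g (θ + t) - g θ|) (𝓝[>] 0) (𝓝 0)) :
    Tendsto (fun l : ℂ => (2 * Real.pi)⁻¹ *
        ∫ s in 0..2 * Real.pi, poissonKernel 0 l (circleMap 0 1 s) * g s)
      (𝓝[stolzRegion (1/4) (circleMap 0 1 θ) \ {circleMap 0 1 θ}] (circleMap 0 1 θ))
      (𝓝 (g θ)) := by
  set w := circleMap 0 1 θ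
  set M := ∫ t in -Real.pi..Real.pi, |g (θ + t) - g θ|
  refine Metric.tendsto_nhds.2 fun ε hε => ?_
  obtain ⟨δ₀, ⟨hδ₀, hδπ⟩, hφδ⟩ :=
    exists_forall_le_mul_of_tendsto_inv_mul hθ (by positivity : 0 < ε / 1250) Real.pi_pos
  have hρ : Tendsto (fun l => ‖l - w‖) (𝓝[stolzRegion (1/4) w \ {w}] w) (𝓝 0) :=
    (tendsto_norm_sub_self w).mono_left nhdsWithin_le_nhds
  have hbound : Tendsto (fun l => 125 * (5 * (ε / 1250) + 4 * ‖l - w‖ / δ₀ ^ 2 * M))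
      (𝓝[stolzRegion (1/4) w \ {w}] w) (𝓝 (ε / 2)) := by
    convert ((((hρ.const_mul 4).div_const (δ₀ ^ 2)).mul_const M).const_add
      (5 * (ε / 1250))).const_mul 125 using 2
    ring
  filter_upwards [self_mem_nhdsWithin, hρ.eventually (ge_mem_nhds hδ₀),
    hbound.eventually (gt_mem_nhds (show ε / 2 < ε by linarith))] with l ⟨hl, hlw⟩ hρδ hlt
  rw [Real.dist_eq]
  exact (abs_poissonIntegral_sub_le hg hper hl hlw hρδ hδπ hφδ).trans_lt hlt

theorem poisson_integral_nontangential_limit_general (h : ℂ → ℝ)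
    (hint : IntervalIntegrable (fun θ : ℝ => h (Complex.exp ((θ : ℂ) * Complex.I)))
      MeasureTheory.volume 0 (2 * Real.pi)) :
    ∀ᵐ (θ : ℝ) ∂(MeasureTheory.volume.restrict (Set.Ioc (0:ℝ) (2 * Real.pi))),
      Tendsto
        (fun l : ℂ => (2 * Real.pi)⁻¹ *
          ∫ s in (0:ℝ)..(2 * Real.pi),
            (1 - ‖l‖^2) / ‖1 - (starRingEnd ℂ) l * Complex.exp (s * Complex.I)‖^2 *
              h (Complex.exp (s * Complex.I)))
        (𝓝[stolzRegion (1/4) (Complex.exp ((θ : ℂ) * Complex.I)) \ {Complex.exp ((θ : ℂ) * Complex.I)}]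
          (Complex.exp ((θ : ℂ) * Complex.I)))
        (𝓝 (h (Complex.exp ((θ : ℂ) * Complex.I)))) := by
  have hcirc (s : ℝ) : Complex.exp (s * Complex.I) = circleMap 0 1 s := by simp [circleMap]
  have hkernel (l : ℂ) (s : ℝ) :
      (1 - ‖l‖ ^ 2) / ‖1 - starRingEnd ℂ l * circleMap 0 1 s‖ ^ 2 =
        poissonKernel 0 l (circleMap 0 1 s) :=
    (poissonKernel_zero_eq_of_norm_eq_one (by simp [norm_circleMap_zero]) l).symm
  set g : ℝ → ℝ := fun s => h (circleMap 0 1 s)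
  have hper : Function.Periodic g (2 * Real.pi) := fun s => by
    simp only [g, periodic_circleMap 0 1 s]
  have hg : ∀ a b, IntervalIntegrable g volume a b :=
    hper.intervalIntegrable₀ Real.two_pi_pos.ne' (by simpa only [hcirc] using hint)
  filter_upwards [ae_restrict_of_ae (ae_tendsto_inv_mul_integral_abs_sub
    (locallyIntegrable_of_forall_intervalIntegrable hg))] with θ hθ
  simp_rw [hcirc, hkernel]
  exact tendsto_poissonIntegral_nhdsWithin_stolzRegion hg hper hθ

/-- if `h ∈ L¹(m)` with `h ≥ 0` on `𝕋`, then for `m`-almost every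
point `e^{iθ} ∈ 𝕋` the Poisson integral of `h` converges to `h(e^{iθ})` as
`λ → e^{iθ}` nontangentially through `Γ_{1/4}(e^{iθ})`.  Here `m` is normalized
arc-length on `𝕋`, parametrized by `θ ∈ (0, 2π]`. -/
theorem poisson_integral_nontangential_limit (h : ℂ → ℝ)
    (hmeas : Measurable h) (hpos : ∀ z : ℂ, ‖z‖ = 1 → 0 ≤ h z)
    (hint : IntervalIntegrable (fun θ : ℝ => h (Complex.exp ((θ : ℂ) * Complex.I)))
      MeasureTheory.volume 0 (2 * Real.pi)) :
    ∀ᵐ (θ : ℝ) ∂(MeasureTheory.volume.restrict (Set.Ioc (0:ℝ) (2 * Real.pi))),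
      Tendsto
        (fun l : ℂ => (2 * Real.pi)⁻¹ *
          ∫ s in (0:ℝ)..(2 * Real.pi),
            (1 - ‖l‖^2) / ‖1 - (starRingEnd ℂ) l * Complex.exp (s * Complex.I)‖^2 *
              h (Complex.exp (s * Complex.I)))
        (𝓝[stolzRegion (1/4) (Complex.exp ((θ : ℂ) * Complex.I)) \ {Complex.exp ((θ : ℂ) * Complex.I)}]
          (Complex.exp ((θ : ℂ) * Complex.I)))
        (𝓝 (h (Complex.exp ((θ : ℂ) * Complex.I)))) :=
  poisson_integral_nontangential_limit_general h hint
end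

section
/- There is an absolute constant ε₁ > 0 with the following property. Let R = {z : |Re z| < 1/2, |Im z| < 1/2}, Q = (closed unit disk) ∖ R, and let K ⊂ closed unit disk be compact with γ(𝔻 ∖ K) < ε₁. Then for every f in A(𝔻) (the uniform closure of polynomials in C(closed unit disk)) and every λ ∈ R, |f(λ)| ≤ sup_{z ∈ Q ∩ K} |f(z)|. -/
/-!
Suppose `|f(λ)| > M := sup_{Q ∩ K} |f|` for an entire `f`. By the maximum principle the component
of `{|f| > M}` containing `λ` is unbounded, so a path inside it runs from `λ` (where `|λ| < 3/4`)
to the circle `|z| = 7/8`. Its part in the annulus `3/4 ≤ |z| ≤ 7/8` avoids `R`, hence avoids `K`,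
and can be replaced by a polygonal arc `Γ ⊂ 𝔻 ∖ K` joining the two circles. For a polygonal arc
from `a` to `b` in `|z| ≤ r`, the function `z - (a + b)/2 - √((z - a)(z - b))`, with the root
continued along `Γ` edge by edge, is holomorphic off `Γ`, bounded by `6r`, and behaves like
`(b - a)²/(8z)` at infinity; hence `γ(Γ) ≥ |b - a|²/(48r)`, which contradicts the smallness of
`γ(𝔻 ∖ K)`. Uniform approximation by polynomials carries the estimate over to `A(𝔻)`.
-/

open Complex MeasureTheory Set Metric Filter Topology

noncomputable def analyticCapacityCompact (K : Set ℂ) : ℝ :=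
  sSup {r : ℝ | ∃ f : ℂ → ℂ, DifferentiableOn ℂ f Kᶜ ∧ (∀ z ∈ Kᶜ, ‖f z‖ ≤ 1) ∧
    ∃ L c : ℂ, Tendsto f (Bornology.cobounded ℂ) (𝓝 L) ∧
      Tendsto (fun z => z * (f z - L)) (Bornology.cobounded ℂ) (𝓝 c) ∧ r = ‖c‖}

noncomputable def analyticCapacity (E : Set ℂ) : ℝ :=
  sSup {r : ℝ | ∃ K : Set ℂ, IsCompact K ∧ K ⊆ E ∧ r = analyticCapacityCompact K}

/-- The open square `R = {|Re z| < 1/2, |Im z| < 1/2}`. -/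
def squareR : Set ℂ := {z : ℂ | |z.re| < 1/2 ∧ |z.im| < 1/2}

lemma exists_first_eq_of_le {φ : ℝ → ℝ} {a b ρ : ℝ} (hab : a ≤ b) (hφ : ContinuousOn φ (Icc a b))
    (ha : φ a ≤ ρ) (hb : ρ ≤ φ b) : ∃ t ∈ Icc a b, φ t = ρ ∧ ∀ s ∈ Ico a t, φ s < ρ := by
  set A := Icc a b ∩ φ ⁻¹' Ici ρ
  have hA : IsClosed A := hφ.preimage_isClosed_of_isClosed isClosed_Icc isClosed_Ici
  have htA : sInf A ∈ A := hA.csInf_mem ⟨b, right_mem_Icc.2 hab, hb⟩ ⟨a, fun t ht => ht.1.1⟩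
  have hbefore : ∀ s ∈ Ico a (sInf A), φ s < ρ := fun s hs =>
    not_le.1 fun hρs => hs.2.not_ge (csInf_le ⟨a, fun t ht => ht.1.1⟩
      ⟨⟨hs.1, hs.2.le.trans htA.1.2⟩, hρs⟩)
  obtain ⟨s, hs, hφs⟩ := intermediate_value_Icc htA.1.1 (hφ.mono (Icc_subset_Icc_right htA.1.2))
    ⟨ha, htA.2⟩
  obtain rfl : s = sInf A := hs.2.eq_or_lt.resolve_right fun hlt => (hbefore s ⟨hs.1, hlt⟩).ne hφs
  exact ⟨_, htA.1, hφs, hbefore⟩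

lemma exists_last_eq_of_le {φ : ℝ → ℝ} {a b ρ : ℝ} (hab : a ≤ b) (hφ : ContinuousOn φ (Icc a b))
    (ha : φ a ≤ ρ) (hb : ρ ≤ φ b) : ∃ t ∈ Icc a b, φ t = ρ ∧ ∀ s ∈ Ioc t b, ρ < φ s := by
  set A := Icc a b ∩ φ ⁻¹' Iic ρ
  have hA : IsClosed A := hφ.preimage_isClosed_of_isClosed isClosed_Icc isClosed_Iic
  have htA : sSup A ∈ A := hA.csSup_mem ⟨a, left_mem_Icc.2 hab, ha⟩ ⟨b, fun t ht => ht.1.2⟩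
  have hafter : ∀ s ∈ Ioc (sSup A) b, ρ < φ s := fun s hs =>
    not_le.1 fun hsρ => hs.1.not_ge (le_csSup ⟨b, fun t ht => ht.1.2⟩
      ⟨⟨htA.1.1.trans hs.1.le, hs.2⟩, hsρ⟩)
  obtain ⟨s, hs, hφs⟩ := intermediate_value_Icc htA.1.2 (hφ.mono (Icc_subset_Icc_left htA.1.1))
    ⟨htA.2, hb⟩
  obtain rfl : s = sSup A :=
    (hs.1.eq_or_lt.resolve_right fun hlt => (hafter s ⟨hlt, hs.2⟩).ne' hφs).symm
  exact ⟨_, htA.1, hφs, hafter⟩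

lemma exists_crossing_Icc {φ : ℝ → ℝ} {a b ρ₁ ρ₂ : ℝ} (hab : a ≤ b)
    (hφ : ContinuousOn φ (Icc a b)) (ha : φ a ≤ ρ₁) (hρ : ρ₁ ≤ ρ₂) (hb : ρ₂ ≤ φ b) :
    ∃ t₁ t₂, a ≤ t₁ ∧ t₁ ≤ t₂ ∧ t₂ ≤ b ∧ φ t₁ = ρ₁ ∧ φ t₂ = ρ₂ ∧
      ∀ t ∈ Icc t₁ t₂, φ t ∈ Icc ρ₁ ρ₂ := by
  obtain ⟨t₂, ht₂, hφt₂, hbefore⟩ := exists_first_eq_of_le hab hφ (ha.trans hρ) hb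
  obtain ⟨t₁, ht₁, hφt₁, hafter⟩ :=
    exists_last_eq_of_le ht₂.1 (hφ.mono (Icc_subset_Icc_right ht₂.2)) ha (hφt₂.symm ▸ hρ)
  refine ⟨t₁, t₂, ht₁.1, ht₁.2, ht₂.2, hφt₁, hφt₂, fun t ht => ⟨?_, ?_⟩⟩
  · rcases ht.1.eq_or_lt with rfl | hlt
    exacts [hφt₁.ge, (hafter t ⟨hlt, ht.2⟩).le]
  · rcases ht.2.eq_or_lt with rfl | hlt
    exacts [hφt₂.le, (hbefore t ⟨ht₁.1.trans ht.1, hlt⟩).le]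

section Polygon

variable {E : Type*} [NormedAddCommGroup E] [NormedSpace ℝ E]

def polygonalPath (v : ℕ → E) (n : ℕ) : Set E :=
  ⋃ i ∈ Finset.range n, segment ℝ (v i) (v (i + 1))

lemma isCompact_polygonalPath (v : ℕ → E) (n : ℕ) : IsCompact (polygonalPath v n) :=
  (Finset.range n).finite_toSet.isCompact_biUnion fun i _ => by
    rw [segment_eq_image]
    exact isCompact_Icc.image (by fun_prop)

lemma Convex.polygonalPath_subset {C : Set E} (hC : Convex ℝ C) {v : ℕ → E} {n : ℕ}
    (hv : ∀ i ≤ n, v i ∈ C) : polygonalPath v n ⊆ C :=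
  iUnion₂_subset fun i hi => hC.segment_subset (hv i (by simp at hi; omega))
    (hv (i + 1) (by simp at hi; omega))

lemma notMem_segment_of_notMem_polygonalPath {v : ℕ → E} {n i : ℕ} {z : E}
    (hz : z ∉ polygonalPath v n) (hi : i < n) : z ∉ segment ℝ (v i) (v (i + 1)) :=
  fun hzi => hz (mem_biUnion (Finset.mem_range.2 hi) hzi)

lemma exists_polygonalPath_subset_of_mapsTo {γ : ℝ → E} {s t : ℝ} {U : Set E} (hst : s ≤ t)
    (hγ : ContinuousOn γ (Icc s t)) (hU : IsOpen U) (hγU : MapsTo γ (Icc s t) U) :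
    ∃ n v, 1 ≤ n ∧ v 0 = γ s ∧ v n = γ t ∧ (∀ i ≤ n, v i ∈ γ '' Icc s t) ∧
      polygonalPath v n ⊆ U := by
  obtain ⟨δ, hδ, hδU⟩ :=
    (isCompact_Icc.image_of_continuousOn hγ).exists_thickening_subset_open hU hγU.image_subset
  obtain ⟨η, hη, hγη⟩ := Metric.uniformContinuousOn_iff.1
    (isCompact_Icc.uniformContinuousOn_of_continuous hγ) δ hδ
  obtain ⟨N, hN⟩ := exists_nat_gt ((t - s) / η)
  have hN1 : (0 : ℝ) < N + 1 := by positivity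
  set τ : ℕ → ℝ := fun i => s + (t - s) * i / (N + 1)
  have hτ : ∀ i ≤ N + 1, τ i ∈ Icc s t := fun i hi => by
    have hi' : (i : ℝ) ≤ N + 1 := by exact_mod_cast hi
    constructor
    · have : 0 ≤ (t - s) * i / (N + 1) := by positivity
      linarith
    · have : (t - s) * i / (N + 1) ≤ t - s := by
        rw [div_le_iff₀ hN1]; nlinarith
      linarith
  have hstep : ∀ i < N + 1, dist (τ (i + 1)) (τ i) < η := fun i _ => by
    have : τ (i + 1) - τ i = (t - s) / (N + 1) := by simp only [τ]; push_cast; ring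
    rw [Real.dist_eq, this, abs_of_nonneg (by apply div_nonneg <;> linarith),
      div_lt_iff₀ hN1]
    rw [div_lt_iff₀ hη] at hN
    nlinarith
  have hτN : τ (N + 1) = t := by simp only [τ]; push_cast; field_simp; ring
  refine ⟨N + 1, γ ∘ τ, by omega, by simp [τ], by simp [hτN], fun i hi => ⟨τ i, hτ i hi, rfl⟩,
    iUnion₂_subset fun i hi => ?_⟩
  have hi : i < N + 1 := Finset.mem_range.1 hi
  refine ((convex_ball _ δ).segment_subset (mem_ball_self hδ) ?_).trans
    ((ball_subset_thickening (mem_image_of_mem γ (hτ i hi.le)) δ).trans hδU)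
  exact hγη _ (hτ _ hi) _ (hτ _ hi.le) (hstep i hi)

lemma exists_polygonalPath_crossing {Ω U : Set E} {a b : E} {ρ₁ ρ₂ : ℝ} (hU : IsOpen U)
    (hab : JoinedIn Ω a b) (ha : ‖a‖ ≤ ρ₁) (hρ : ρ₁ ≤ ρ₂) (hb : ρ₂ ≤ ‖b‖)
    (hΩU : ∀ x ∈ Ω, ‖x‖ ∈ Icc ρ₁ ρ₂ → x ∈ U) :
    ∃ n v, 1 ≤ n ∧ (∀ i ≤ n, ‖v i‖ ≤ ρ₂) ∧ ρ₂ - ρ₁ ≤ ‖v n - v 0‖ ∧ polygonalPath v n ⊆ U := by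
  obtain ⟨γ, hγΩ⟩ := hab
  have hγ : Continuous γ.extend := γ.continuous_extend
  obtain ⟨t₁, t₂, ht₁, ht₁₂, ht₂, hφt₁, hφt₂, hcross⟩ :=
    exists_crossing_Icc zero_le_one hγ.norm.continuousOn (by simpa using ha) hρ (by simpa using hb)
  obtain ⟨n, v, hn, hv₀, hvn, hv, hvU⟩ := exists_polygonalPath_subset_of_mapsTo ht₁₂
    hγ.continuousOn hU fun t ht => hΩU _ (by
      rw [γ.extend_apply ⟨ht₁.trans ht.1, ht.2.trans ht₂⟩]; exact hγΩ _) (hcross t ht)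
  refine ⟨n, v, hn, fun i hi => ?_, ?_, hvU⟩
  · obtain ⟨t, ht, hti⟩ := hv i hi
    exact hti ▸ (hcross t ht).2
  · have := norm_sub_norm_le (v n) (v 0)
    rw [hv₀, hvn, hφt₁, hφt₂] at this
    rwa [hv₀, hvn]

end Polygon

open Bornology

lemma norm_le_of_forall_sphere_norm_le_of_tendsto {F : ℂ → ℂ} {c : ℂ} {r R C : ℝ} (hr : 0 < r)
    (hrR : r < R) (hF : DifferentiableOn ℂ F {z | r < ‖z‖}) (hc : Tendsto F (cobounded ℂ) (𝓝 c))
    (hC : ∀ z, ‖z‖ = R → ‖F z‖ ≤ C) {z : ℂ} (hz : R ≤ ‖z‖) : ‖F z‖ ≤ C := by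
  classical
  have hR : 0 < R := hr.trans hrR
  set G : ℂ → ℂ := Function.update (fun w => F w⁻¹) 0 c
  have hG : DifferentiableOn ℂ G (ball 0 r⁻¹) := by
    refine (differentiableOn_compl_singleton_and_continuousAt_iff
      (ball_mem_nhds 0 (inv_pos.2 hr))).1 ⟨fun w hw => ?_, ?_⟩
    · have hw0 : w ≠ 0 := hw.2
      have hrw : r < ‖w⁻¹‖ := by
        rw [norm_inv, lt_inv_comm₀ hr (norm_pos_iff.2 hw0)]
        simpa using hw.1
      have hFw := hF.differentiableAt ((isOpen_lt continuous_const continuous_norm).mem_nhds hrw)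
      refine ((hFw.comp w (differentiableAt_inv hw0)).congr_of_eventuallyEq
        ?_).differentiableWithinAt
      filter_upwards [isOpen_ne.mem_nhds hw0] with x hx using Function.update_of_ne hx _ _
    · exact continuousAt_update_same.2 (hc.comp tendsto_inv₀_nhdsNE_zero)
  have hmax : ∀ w ∈ closedBall (0 : ℂ) R⁻¹, ‖G w‖ ≤ C := by
    rw [← closure_ball 0 (inv_ne_zero hR.ne')]
    refine fun w hw => Complex.norm_le_of_forall_mem_frontier_norm_le isBounded_ball
      (hG.mono ?_).diffContOnCl (fun w hw => ?_) hw
    · rw [closure_ball 0 (inv_ne_zero hR.ne')]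
      exact closedBall_subset_ball ((inv_lt_inv₀ hR hr).2 hrR)
    · rw [frontier_ball 0 (inv_ne_zero hR.ne'), mem_sphere_zero_iff_norm] at hw
      have hw0 : w ≠ 0 := norm_pos_iff.1 (hw ▸ inv_pos.2 hR)
      rw [show G w = F w⁻¹ from Function.update_of_ne hw0 _ _]
      exact hC _ (by rw [norm_inv, hw, inv_inv])
  have hz0 : z ≠ 0 := norm_pos_iff.1 (hR.trans_le hz)
  simpa [G, Function.update_of_ne (inv_ne_zero hz0)] using
    hmax z⁻¹ (by simpa using inv_anti₀ hR hz)

def IsCapacityTestFunction (K : Set ℂ) (f : ℂ → ℂ) (c : ℂ) : Prop :=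
  DifferentiableOn ℂ f Kᶜ ∧ (∀ z ∈ Kᶜ, ‖f z‖ ≤ 1) ∧
    ∃ L, Tendsto f (cobounded ℂ) (𝓝 L) ∧ Tendsto (fun z => z * (f z - L)) (cobounded ℂ) (𝓝 c)

namespace IsCapacityTestFunction

variable {K : Set ℂ} {f : ℂ → ℂ} {c : ℂ}

lemma norm_le {r : ℝ} (hf : IsCapacityTestFunction K f c) (hr : 0 < r)
    (hK : K ⊆ closedBall 0 r) : ‖c‖ ≤ 4 * r := by
  obtain ⟨hd, hb, L, hL, hc⟩ := hf
  have hout : ∀ z : ℂ, r < ‖z‖ → z ∈ Kᶜ := fun z hz hzK =>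
    (mem_closedBall_zero_iff.1 (hK hzK)).not_gt hz
  have hfar := (tendsto_norm_cobounded_atTop (E := ℂ)).eventually_gt_atTop (2 * r)
  have hL1 : ‖L‖ ≤ 1 := le_of_tendsto hL.norm <| hfar.mono fun z hz => hb z (hout z (by linarith))
  have hsphere : ∀ z : ℂ, ‖z‖ = 2 * r → ‖z * (f z - L)‖ ≤ 4 * r := fun z hz => by
    rw [norm_mul, hz]
    have := norm_sub_le (f z) L
    have := hb z (hout z (by linarith))
    nlinarith
  refine le_of_tendsto hc.norm (hfar.mono fun z hz =>
    norm_le_of_forall_sphere_norm_le_of_tendsto hr (by linarith) ?_ hc hsphere hz.le)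
  exact differentiableOn_id.mul ((hd.mono fun z hz => hout z hz).sub_const L)

lemma norm_le_analyticCapacityCompact (hf : IsCapacityTestFunction K f c) (hK : IsBounded K) :
    ‖c‖ ≤ analyticCapacityCompact K := by
  obtain ⟨r, hr, hKr⟩ := hK.subset_closedBall_lt 0 0
  obtain ⟨hd, hb, L, hL, hc⟩ := hf
  refine le_csSup ⟨4 * r, ?_⟩ ⟨f, hd, hb, L, c, hL, hc, rfl⟩
  rintro _ ⟨g, hgd, hgb, L', c', hL', hc', rfl⟩
  exact norm_le ⟨hgd, hgb, L', hL', hc'⟩ hr hKr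

end IsCapacityTestFunction

lemma analyticCapacityCompact_le_analyticCapacity {E K : Set ℂ} (hE : IsBounded E)
    (hK : IsCompact K) (hKE : K ⊆ E) : analyticCapacityCompact K ≤ analyticCapacity E := by
  obtain ⟨r, hr, hEr⟩ := hE.subset_closedBall_lt 0 0
  refine le_csSup ⟨4 * r, ?_⟩ ⟨K, hK, hKE, rfl⟩
  rintro _ ⟨K', -, hK'E, rfl⟩
  refine Real.sSup_le ?_ (by positivity)
  rintro _ ⟨g, hgd, hgb, L, c, hL, hc, rfl⟩
  exact IsCapacityTestFunction.norm_le ⟨hgd, hgb, L, hL, hc⟩ hr (hK'E.trans hEr)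

lemma tendsto_sub_div_self_cobounded (a : ℂ) :
    Tendsto (fun z => (z - a) / z) (cobounded ℂ) (𝓝 1) := by
  have : Tendsto (fun z : ℂ => 1 - a * z⁻¹) (cobounded ℂ) (𝓝 1) := by
    simpa using (tendsto_inv₀_cobounded.const_mul a).const_sub 1
  refine this.congr' ?_
  filter_upwards [(tendsto_norm_cobounded_atTop (E := ℂ)).eventually_gt_atTop 0] with z hz
  field_simp [norm_pos_iff.1 hz]

lemma tendsto_mul_sub_sub_of_sq_eq {g : ℂ → ℂ} {a b : ℂ}
    (hsq : ∀ᶠ z in cobounded ℂ, g z ^ 2 = (z - a) * (z - b))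
    (hg : Tendsto (fun z => g z / z) (cobounded ℂ) (𝓝 1)) :
    Tendsto (fun z => z * (z - (a + b) / 2 - g z)) (cobounded ℂ) (𝓝 ((b - a) ^ 2 / 8)) := by
  have hsum : Tendsto (fun z => (z - (a + b) / 2 + g z) / z) (cobounded ℂ) (𝓝 2) := by
    simpa [add_div, one_add_one_eq_two] using (tendsto_sub_div_self_cobounded _).add hg
  have hquot : Tendsto (fun z => ((b - a) / 2) ^ 2 / ((z - (a + b) / 2 + g z) / z))
      (cobounded ℂ) (𝓝 ((b - a) ^ 2 / 8)) := by
    have := (tendsto_const_nhds (x := ((b - a) / 2) ^ 2)).div hsum two_ne_zero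
    rwa [show ((b - a) / 2) ^ 2 / 2 = (b - a) ^ 2 / 8 by ring] at this
  refine hquot.congr' ?_
  filter_upwards [hsq, hsum.eventually_ne two_ne_zero] with z hz hne
  have hprod : (z - (a + b) / 2 - g z) * (z - (a + b) / 2 + g z) = ((b - a) / 2) ^ 2 := by
    linear_combination -hz
  rw [← hprod, div_div_eq_mul_div, mul_right_comm,
    mul_div_cancel_right₀ _ (div_ne_zero_iff.1 hne).1, mul_comm]

lemma norm_sub_sub_le_of_sq_eq {a b z w : ℂ} {r : ℝ} (ha : ‖a‖ ≤ r) (hb : ‖b‖ ≤ r)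
    (hz : ‖z‖ ≤ 2 * r) (hw : w ^ 2 = (z - a) * (z - b)) : ‖z - (a + b) / 2 - w‖ ≤ 6 * r := by
  have hr : 0 ≤ r := (norm_nonneg a).trans ha
  have hw3 : ‖w‖ ^ 2 ≤ (3 * r) ^ 2 := by
    rw [← norm_pow, hw, norm_mul, sq]
    exact mul_le_mul (by linarith [norm_sub_le z a]) (by linarith [norm_sub_le z b])
      (norm_nonneg _) (by positivity)
  have := abs_le_of_sq_le_sq' hw3 (by positivity)
  have := norm_sub_le (z - (a + b) / 2) w
  have := norm_sub_le z ((a + b) / 2)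
  have := norm_add_le a b
  simp only [norm_div, RCLike.norm_ofNat] at *
  linarith

theorem isCapacityTestFunction_of_sq_eq {K : Set ℂ} {g : ℂ → ℂ} {a b : ℂ} {r : ℝ} (hr : 0 < r)
    (hK : K ⊆ closedBall 0 r) (ha : ‖a‖ ≤ r) (hb : ‖b‖ ≤ r) (hgd : DifferentiableOn ℂ g Kᶜ)
    (hsq : ∀ z ∉ K, g z ^ 2 = (z - a) * (z - b))
    (hg : Tendsto (fun z => g z / z) (cobounded ℂ) (𝓝 1)) :
    IsCapacityTestFunction K (fun z => (z - (a + b) / 2 - g z) / (6 * r))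
      ((b - a) ^ 2 / (48 * r)) := by
  set F := fun z => z - (a + b) / 2 - g z
  have hout : ∀ z : ℂ, r < ‖z‖ → z ∉ K := fun z hz hzK =>
    (mem_closedBall_zero_iff.1 (hK hzK)).not_gt hz
  have hzF := tendsto_mul_sub_sub_of_sq_eq (a := a) (b := b)
    ((tendsto_norm_cobounded_atTop.eventually_gt_atTop r).mono fun z hz => hsq z (hout z hz)) hg
  have hF : Tendsto F (cobounded ℂ) (𝓝 0) := by
    refine (by simpa using hzF.mul tendsto_inv₀_cobounded :
      Tendsto (fun z => z * F z * z⁻¹) (cobounded ℂ) (𝓝 0)).congr' ?_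
    filter_upwards [(tendsto_norm_cobounded_atTop (E := ℂ)).eventually_gt_atTop 0] with z hz
    field_simp [norm_pos_iff.1 hz]
  have hFd : DifferentiableOn ℂ F Kᶜ := (differentiableOn_id.sub_const _).sub hgd
  have hnear : ∀ z ∉ K, ‖z‖ ≤ 2 * r → ‖F z‖ ≤ 6 * r := fun z hzK hz =>
    norm_sub_sub_le_of_sq_eq ha hb hz (hsq z hzK)
  have hbound : ∀ z ∉ K, ‖F z‖ ≤ 6 * r := fun z hzK => by
    rcases le_or_gt ‖z‖ (2 * r) with hz | hz
    · exact hnear z hzK hz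
    · exact norm_le_of_forall_sphere_norm_le_of_tendsto hr (by linarith)
        (hFd.mono fun z hz => hout z hz) hF
        (fun z hz => hnear z (hout z (by rw [hz]; linarith)) hz.le) hz.le
  refine ⟨hFd.div_const _, fun z hz => ?_, 0, by simpa using hF.div_const (6 * r : ℂ), ?_⟩
  · rw [norm_div, div_le_one (by simp [hr.ne'])]
    simpa [abs_of_pos hr] using hbound z hz
  · convert hzF.div_const (6 * r : ℂ) using 1
    · ext z; simp only [sub_zero]; ring
    · congr 1; ring

-- The principal root is holomorphic off `[u, w]`: its argument lies in `(-∞, 0]` exactly there.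
noncomputable def segmentSqrt (u w z : ℂ) : ℂ :=
  (z - (u + w) / 2) * (1 - ((w - u) / 2) ^ 2 / (z - (u + w) / 2) ^ 2) ^ (1 / 2 : ℂ)

lemma sub_midpoint_ne_zero {u w z : ℂ} (hz : z ∉ segment ℝ u w) : z - (u + w) / 2 ≠ 0 := by
  refine fun h => hz ⟨1 / 2, 1 / 2, by norm_num, by norm_num, by norm_num, ?_⟩
  rw [sub_eq_zero.1 h, real_smul, real_smul]
  push_cast
  ring

lemma mem_segment_of_sq_eq_mul_sq {u w z : ℂ} {ρ : ℝ} (hρ : 1 ≤ ρ)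
    (h : ((w - u) / 2) ^ 2 = ρ * (z - (u + w) / 2) ^ 2) : z ∈ segment ℝ u w := by
  set t := 1 / √ρ
  have hsqrt : 1 ≤ √ρ := Real.one_le_sqrt.2 hρ
  have ht : 0 ≤ t ∧ t ≤ 1 := ⟨by positivity, by rw [div_le_one (by positivity)]; exact hsqrt⟩
  have htρ : (t : ℂ) ^ 2 * ρ = 1 := by
    norm_cast
    rw [div_pow, Real.sq_sqrt (by linarith)]
    field_simp
  have hroots :
      (z - (u + w) / 2 - t * ((w - u) / 2)) * (z - (u + w) / 2 + t * ((w - u) / 2)) = 0 := by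
    linear_combination (-(t : ℂ) ^ 2) * h - (z - (u + w) / 2) ^ 2 * htρ
  rcases mul_eq_zero.1 hroots with h' | h'
  · refine ⟨(1 - t) / 2, (1 + t) / 2, by linarith, by linarith, by ring, ?_⟩
    rw [show z = (u + w) / 2 + t * ((w - u) / 2) by linear_combination h', real_smul, real_smul]
    push_cast
    ring
  · refine ⟨(1 + t) / 2, (1 - t) / 2, by linarith, by linarith, by ring, ?_⟩
    rw [show z = (u + w) / 2 - t * ((w - u) / 2) by linear_combination h', real_smul, real_smul]
    push_cast
    ring

lemma one_sub_div_sq_mem_slitPlane {u w z : ℂ} (hz : z ∉ segment ℝ u w) :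
    1 - ((w - u) / 2) ^ 2 / (z - (u + w) / 2) ^ 2 ∈ slitPlane := by
  set A := ((w - u) / 2) ^ 2 / (z - (u + w) / 2) ^ 2
  rw [mem_slitPlane_iff]
  by_contra! hA
  simp only [sub_re, one_re, sub_im, one_im, zero_sub, neg_eq_zero] at hA
  have hAρ : A = A.re := ext rfl (by simpa using hA.2)
  refine hz (mem_segment_of_sq_eq_mul_sq (by linarith : 1 ≤ A.re) ?_)
  rw [← hAρ, div_mul_cancel₀ _ (pow_ne_zero 2 (sub_midpoint_ne_zero hz))]

lemma segmentSqrt_sq {u w z : ℂ} (hz : z ∉ segment ℝ u w) :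
    segmentSqrt u w z ^ 2 = (z - u) * (z - w) := by
  have hS : ((1 - ((w - u) / 2) ^ 2 / (z - (u + w) / 2) ^ 2) ^ (1 / 2 : ℂ)) ^ 2
      = 1 - ((w - u) / 2) ^ 2 / (z - (u + w) / 2) ^ 2 := by
    rw [sq, ← cpow_add _ _ (slitPlane_ne_zero (one_sub_div_sq_mem_slitPlane hz))]
    norm_num
  rw [segmentSqrt, mul_pow, hS, mul_sub, mul_one,
    mul_div_cancel₀ _ (pow_ne_zero 2 (sub_midpoint_ne_zero hz))]
  ring

lemma differentiableAt_segmentSqrt {u w z : ℂ} (hz : z ∉ segment ℝ u w) :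
    DifferentiableAt ℂ (segmentSqrt u w) z := by
  have hbase : DifferentiableAt ℂ (fun z => 1 - ((w - u) / 2) ^ 2 / (z - (u + w) / 2) ^ 2) z := by
    fun_prop (disch := exact pow_ne_zero 2 (sub_midpoint_ne_zero hz))
  exact (differentiableAt_id.sub_const _).mul
    (hbase.cpow (differentiableAt_const _) (one_sub_div_sq_mem_slitPlane hz))

lemma tendsto_segmentSqrt_div_self (u w : ℂ) :
    Tendsto (fun z => segmentSqrt u w z / z) (cobounded ℂ) (𝓝 1) := by
  have hbase : Tendsto (fun z => 1 - ((w - u) / 2) ^ 2 / (z - (u + w) / 2) ^ 2)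
      (cobounded ℂ) (𝓝 1) := by
    have := ((tendsto_inv₀_cobounded.comp (tendsto_sub_const_cobounded ((u + w) / 2))).pow 2
      ).const_mul (((w - u) / 2) ^ 2)
    simpa [div_eq_mul_inv] using this.const_sub 1
  have hsqrt := ((continuousAt_cpow_const (b := 1 / 2) one_mem_slitPlane).tendsto.comp hbase)
  rw [one_cpow] at hsqrt
  simpa [segmentSqrt, mul_div_right_comm] using (tendsto_sub_div_self_cobounded _).mul hsqrt

-- Each interior vertex is an endpoint of two consecutive edges, so dividing by `z - v i` once
-- leaves a branch of `√((z - v 0) (z - v n))`.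
noncomputable def polygonSqrt (v : ℕ → ℂ) (n : ℕ) (z : ℂ) : ℂ :=
  (∏ i ∈ Finset.range n, segmentSqrt (v i) (v (i + 1)) z) / ∏ i ∈ Finset.Ico 1 n, (z - v i)

section PolygonSqrt

variable {v : ℕ → ℂ} {n : ℕ}

lemma prod_range_sub_mul_sub_succ {z : ℂ} (hn : 1 ≤ n) :
    ∏ i ∈ Finset.range n, ((z - v i) * (z - v (i + 1)))
      = (z - v 0) * (z - v n) * (∏ i ∈ Finset.Ico 1 n, (z - v i)) ^ 2 := by
  induction n, hn using Nat.le_induction with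
  | base => simp
  | succ n hn ih =>
    rw [Finset.prod_range_succ, ih, Finset.prod_Ico_succ_top hn]
    ring

lemma prod_Ico_sub_ne_zero {z : ℂ} (hz : z ∉ polygonalPath v n) :
    ∏ i ∈ Finset.Ico 1 n, (z - v i) ≠ 0 :=
  Finset.prod_ne_zero_iff.2 fun i hi hzi => notMem_segment_of_notMem_polygonalPath hz
    (Finset.mem_Ico.1 hi).2 (sub_eq_zero.1 hzi ▸ left_mem_segment ℝ (v i) (v (i + 1)))

lemma polygonSqrt_sq (hn : 1 ≤ n) {z : ℂ} (hz : z ∉ polygonalPath v n) :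
    polygonSqrt v n z ^ 2 = (z - v 0) * (z - v n) := by
  rw [polygonSqrt, div_pow, ← Finset.prod_pow, Finset.prod_congr rfl fun i hi =>
    segmentSqrt_sq (notMem_segment_of_notMem_polygonalPath hz (Finset.mem_range.1 hi)),
    prod_range_sub_mul_sub_succ hn,
    mul_div_cancel_right₀ _ (pow_ne_zero 2 (prod_Ico_sub_ne_zero hz))]

lemma differentiableOn_polygonSqrt : DifferentiableOn ℂ (polygonSqrt v n) (polygonalPath v n)ᶜ :=
  fun _ hz => (DifferentiableAt.div
    (DifferentiableAt.fun_finsetProd fun _ hi => differentiableAt_segmentSqrt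
      (notMem_segment_of_notMem_polygonalPath hz (Finset.mem_range.1 hi)))
    (DifferentiableAt.fun_finsetProd fun _ _ => differentiableAt_id.sub_const _)
    (prod_Ico_sub_ne_zero hz)).differentiableWithinAt

lemma tendsto_polygonSqrt_div_self (hn : 1 ≤ n) :
    Tendsto (fun z => polygonSqrt v n z / z) (cobounded ℂ) (𝓝 1) := by
  have hnum := tendsto_finsetProd (Finset.range n) fun i _ =>
    tendsto_segmentSqrt_div_self (v i) (v (i + 1))
  have hden := tendsto_finsetProd (Finset.Ico 1 n) fun i _ => tendsto_sub_div_self_cobounded (v i)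
  have hquot : Tendsto (fun z => (∏ i ∈ Finset.range n, segmentSqrt (v i) (v (i + 1)) z / z) /
      ∏ i ∈ Finset.Ico 1 n, ((z - v i) / z)) (cobounded ℂ) (𝓝 1) := by
    have := hnum.div hden (by simp)
    rwa [Finset.prod_const_one, Finset.prod_const_one, div_one] at this
  refine hquot.congr' ?_
  filter_upwards [(tendsto_norm_cobounded_atTop (E := ℂ)).eventually_gt_atTop 0] with z hz
  obtain ⟨k, rfl⟩ : ∃ k, n = k + 1 := ⟨n - 1, by omega⟩
  simp only [Finset.prod_div_distrib, Finset.prod_const, Finset.card_range,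
    Nat.card_Ico, Nat.add_sub_cancel, polygonSqrt]
  field_simp [norm_pos_iff.1 hz]
  ring

theorem div_le_analyticCapacityCompact_polygonalPath {r : ℝ} (hn : 1 ≤ n) (hr : 0 < r)
    (hv : ∀ i ≤ n, ‖v i‖ ≤ r) :
    ‖v n - v 0‖ ^ 2 / (48 * r) ≤ analyticCapacityCompact (polygonalPath v n) := by
  have hP := (convex_closedBall (0 : ℂ) r).polygonalPath_subset fun i hi =>
    mem_closedBall_zero_iff.2 (hv i hi)
  have := (isCapacityTestFunction_of_sq_eq hr hP (hv 0 (Nat.zero_le n)) (hv n le_rfl)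
    differentiableOn_polygonSqrt (fun z hz => polygonSqrt_sq hn hz)
    (tendsto_polygonSqrt_div_self hn)).norm_le_analyticCapacityCompact
    (isCompact_polygonalPath v n).isBounded
  simpa [norm_div, norm_pow, abs_of_pos hr] using this

end PolygonSqrt

lemma IsOpen.notMem_of_mem_frontier_connectedComponentIn {X : Type*} [TopologicalSpace X]
    [LocallyConnectedSpace X] {V : Set X} (hV : IsOpen V) {x w : X}
    (hw : w ∈ frontier (connectedComponentIn V x)) : w ∉ V := by
  rw [hV.connectedComponentIn.frontier_eq] at hw
  intro hwV
  obtain ⟨y, hyw, hyx⟩ := mem_closure_iff.1 hw.1 _ hV.connectedComponentIn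
    (mem_connectedComponentIn hwV)
  exact hw.2 (connectedComponentIn_eq hyx ▸ connectedComponentIn_eq hyw ▸
    mem_connectedComponentIn hwV)

lemma not_isBounded_connectedComponentIn_norm_gt {f : ℂ → ℂ} (hf : Differentiable ℂ f) {M : ℝ}
    {l : ℂ} (hl : M < ‖f l‖) : ¬IsBounded (connectedComponentIn {z | M < ‖f z‖} l) := fun hbdd =>
  hl.not_ge <| Complex.norm_le_of_forall_mem_frontier_norm_le hbdd hf.diffContOnCl
    (fun _ hw => not_lt.1 ((isOpen_lt continuous_const hf.continuous.norm
      ).notMem_of_mem_frontier_connectedComponentIn hw))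
    (subset_closure (mem_connectedComponentIn hl))

lemma norm_lt_of_abs_re_le_of_abs_im_le {z : ℂ} (hre : |z.re| ≤ 1 / 2) (him : |z.im| ≤ 1 / 2) :
    ‖z‖ < 3 / 4 := by
  have hsq : ‖z‖ ^ 2 = z.re ^ 2 + z.im ^ 2 := by rw [Complex.sq_norm, normSq_apply]; ring
  nlinarith [norm_nonneg z, sq_abs z.re, sq_abs z.im, abs_nonneg z.re, abs_nonneg z.im]

theorem norm_le_of_analyticCapacity_lt {K : Set ℂ}
    (hK : analyticCapacity (ball 0 1 \ K) < (7 / 8 - 3 / 4) ^ 2 / (48 * (7 / 8)))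
    {f : ℂ → ℂ} (hf : Differentiable ℂ f) {M : ℝ}
    (hM : ∀ z ∈ (closedBall 0 1 \ squareR) ∩ K, ‖f z‖ ≤ M) {l : ℂ} (hl : l ∈ squareR) :
    ‖f l‖ ≤ M := by
  by_contra! hlM
  set V := {z | M < ‖f z‖}
  have hV : IsOpen V := isOpen_lt continuous_const hf.continuous.norm
  set Ω := connectedComponentIn V l
  obtain ⟨b, hbΩ, hb⟩ : ∃ b ∈ Ω, 7 / 8 ≤ ‖b‖ := by
    by_contra! h
    exact not_isBounded_connectedComponentIn_norm_gt hf hlM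
      ((isBounded_closedBall (x := (0 : ℂ)) (r := 7 / 8)).subset fun z hz =>
        mem_closedBall_zero_iff.2 (h z hz).le)
  have hpath : JoinedIn Ω l b :=
    (hV.connectedComponentIn.isConnected_iff_isPathConnected.1
      (isConnected_connectedComponentIn_iff.2 hlM)).joinedIn l (mem_connectedComponentIn hlM) b hbΩ
  set Q := {z : ℂ | |z.re| ≤ 1 / 2 ∧ |z.im| ≤ 1 / 2}
  have hQ : IsClosed Q := (isClosed_le (continuous_abs.comp continuous_re) continuous_const).inter
    (isClosed_le (continuous_abs.comp continuous_im) continuous_const)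
  have hUK : V ∩ (ball 0 1 \ Q) ⊆ ball 0 1 \ K := fun z hz =>
    ⟨hz.2.1, fun hzK => (hM z ⟨⟨ball_subset_closedBall hz.2.1,
      fun hzR => hz.2.2 ⟨hzR.1.le, hzR.2.le⟩⟩, hzK⟩).not_gt hz.1⟩
  obtain ⟨n, v, hn, hv, hvn, hvU⟩ := exists_polygonalPath_crossing (ρ₁ := 3 / 4) (ρ₂ := 7 / 8)
    (hV.inter (isOpen_ball.sdiff hQ)) hpath (norm_lt_of_abs_re_le_of_abs_im_le hl.1.le hl.2.le).le
    (by norm_num) hb fun x hxΩ hx => ⟨connectedComponentIn_subset _ _ hxΩ,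
      mem_ball_zero_iff.2 (hx.2.trans_lt (by norm_num : (7 / 8 : ℝ) < 1)),
      fun hxQ => (norm_lt_of_abs_re_le_of_abs_im_le hxQ.1 hxQ.2).not_ge hx.1⟩
  refine hK.not_ge ?_
  calc (7 / 8 - 3 / 4) ^ 2 / (48 * (7 / 8)) ≤ ‖v n - v 0‖ ^ 2 / (48 * (7 / 8)) := by
        gcongr
    _ ≤ analyticCapacityCompact (polygonalPath v n) :=
        div_le_analyticCapacityCompact_polygonalPath hn (by norm_num) hv
    _ ≤ analyticCapacity (ball 0 1 \ K) := analyticCapacityCompact_le_analyticCapacity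
        (isBounded_ball.subset sdiff_subset) (isCompact_polygonalPath v n) (hvU.trans hUK)

/-- Lemma 2.3 of the paper: there is an absolute constant
`ε₁ > 0` such that if `K` is a compact subset of the closed unit disk with
`γ(𝔻 ∖ K) < ε₁`, then every `f` in the disk algebra `A(𝔻)` (the uniform closure
of polynomials in `C(closed unit disk)`) satisfies
`|f(λ)| ≤ sup_{z ∈ Q ∩ K} |f(z)|` for all `λ ∈ R`, where `Q = closed disk ∖ R`. -/
theorem capacity_maximum_principle_square :
    ∃ ε₁ : ℝ, 0 < ε₁ ∧
      ∀ K : Set ℂ, IsCompact K → K ⊆ Metric.closedBall 0 1 →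
        analyticCapacity (Metric.ball 0 1 \ K) < ε₁ →
        ∀ f : ℂ → ℂ, ContinuousOn f (Metric.closedBall 0 1) →
          (∀ ε > (0:ℝ), ∃ P : Polynomial ℂ,
            ∀ z ∈ Metric.closedBall (0:ℂ) 1, ‖f z - P.eval z‖ < ε) →
          ∀ l ∈ squareR,
            ‖f l‖ ≤ ⨆ z ∈ (Metric.closedBall (0:ℂ) 1 \ squareR) ∩ K, ‖f z‖ := by
  refine ⟨(7 / 8 - 3 / 4) ^ 2 / (48 * (7 / 8)), by norm_num,
    fun K _ _ hK f hf happrox l hl => ?_⟩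
  set S := (closedBall (0 : ℂ) 1 \ squareR) ∩ K
  obtain ⟨B, hB⟩ := (isCompact_closedBall (0 : ℂ) 1).exists_bound_of_continuousOn hf
  have hfS : ∀ z ∈ S, ‖f z‖ ≤ ⨆ z ∈ S, ‖f z‖ := by
    refine le_ciSup₂ (f := fun z (_ : z ∈ S) => ‖f z‖) ⟨B, ?_⟩
    simp only [upperBounds, mem_iUnion, mem_range]
    rintro _ ⟨z, hz, rfl⟩
    exact hB z hz.1.1
  have hl1 : l ∈ closedBall (0 : ℂ) 1 := mem_closedBall_zero_iff.2
    (by linarith [norm_lt_of_abs_re_le_of_abs_im_le hl.1.le hl.2.le])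
  refine le_of_forall_pos_lt_add fun ε hε => ?_
  obtain ⟨P, hP⟩ := happrox (ε / 2) (half_pos hε)
  have hPl := norm_le_of_analyticCapacity_lt hK P.differentiable
    (M := (⨆ z ∈ S, ‖f z‖) + ε / 2) (fun z hz => by
      linarith [norm_sub_norm_le (P.eval z) (f z), norm_sub_rev (P.eval z) (f z), hP z hz.1.1,
        hfS z hz]) hl
  linarith [norm_sub_norm_le (f l) (P.eval l), hP l hl1]
end
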